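/- arXiv:2111.05908 — 8 statements merged into one kernel-verified Lean document; each statement's English description precedes it below -/
import Mathlib

section
/- For every finite simple graph G, the chromatic number of G is at most wd(G) + 1, where wd(G) denotes the weak degeneracy of G. -/
open scoped Classical

namespace WeakDeg

variable {V : Type*}

/-- `WeakDegenOn G S f` means: starting from the induced subgraph `G[S]` of `G` with value
function `f`, it is possible to remove all vertices by a sequence of legal applications of the
operations `Delete` and `DelSave`. `Delete(u)` removes `u` and decreases by one the value of
every remaining neighbor of `u`; it is legal if the resulting function is nonnegative on the
remaining vertices. `DelSave(u, w)` (for `w` a neighbor of `u` with `f w < f u`) removes `u` and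
decreases by one the value of every remaining neighbor of `u` except `w`; it is legal if
`f w < f u` and the resulting function is nonnegative on the remaining vertices. -/
inductive WeakDegenOn (G : SimpleGraph V) : Finset V → (V → ℤ) → Prop
  | empty (f : V → ℤ) : WeakDegenOn G ∅ f
  | delete (S : Finset V) (f : V → ℤ) (u : V) (hu : u ∈ S)
      (hleg : ∀ v ∈ S.erase u, 0 ≤ if G.Adj u v then f v - 1 else f v)
      (h : WeakDegenOn G (S.erase u) fun v => if G.Adj u v then f v - 1 else f v) :
      WeakDegenOn G S f
  | delSave (S : Finset V) (f : V → ℤ) (u w : V) (hu : u ∈ S) (hw : w ∈ S)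
      (hadj : G.Adj u w) (hlt : f w < f u)
      (hleg : ∀ v ∈ S.erase u, 0 ≤ if G.Adj u v ∧ v ≠ w then f v - 1 else f v)
      (h : WeakDegenOn G (S.erase u) fun v => if G.Adj u v ∧ v ≠ w then f v - 1 else f v) :
      WeakDegenOn G S f

/-- `G` is weakly `f`-degenerate, for `f : V → ℕ`. -/
def WeaklyDegenerateWith (G : SimpleGraph V) [Fintype V] (f : V → ℕ) : Prop :=
  WeakDegenOn G Finset.univ fun v => (f v : ℤ)

/-- `G` is weakly `d`-degenerate. -/
def WeaklyDegenerate (G : SimpleGraph V) [Fintype V] (d : ℕ) : Prop :=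
  WeaklyDegenerateWith G fun _ => d

/-- The weak degeneracy `wd(G)` of `G`: the least `d` such that `G` is weakly `d`-degenerate. -/
noncomputable def weakDegeneracy (G : SimpleGraph V) [Fintype V] : ℕ :=
  sInf {d : ℕ | WeaklyDegenerate G d}

lemma card_erase_lower (s : Finset ℕ) (a : ℕ) (m : ℤ) (h : m < s.card) :
    m - 1 < ((s.erase a).card : ℤ) := by
  have h1 : s.card - 1 ≤ (s.erase a).card := Finset.pred_card_le_card_erase
  omega

/-- main coloring lemma -/
lemma exists_coloring (G : SimpleGraph V) (S : Finset V) (f : V → ℤ)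
    (h : WeakDegenOn G S f) :
    ∀ L : V → Finset ℕ, (∀ v ∈ S, 0 ≤ f v) → (∀ v ∈ S, f v < ((L v).card : ℤ)) →
    ∃ c : V → ℕ, (∀ v ∈ S, c v ∈ L v) ∧ ∀ v ∈ S, ∀ w ∈ S, G.Adj v w → c v ≠ c w := by
  induction h with
  | empty f =>
    intro L _ _
    exact ⟨fun _ => 0, by simp, by simp⟩
  | delete S f u hu hleg h ih =>
    intro L hpos hL
    have hLu : (L u).Nonempty := by
      rw [← Finset.card_pos]
      have h1 := hpos u hu; have h2 := hL u hu; omega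
    obtain ⟨a, ha⟩ := hLu
    set L' : V → Finset ℕ := fun v => if G.Adj u v then (L v).erase a else L v with hL'def
    obtain ⟨c, hc1, hc2⟩ := ih L' hleg (by
      intro v hv
      have hv' := hL v (Finset.mem_of_mem_erase hv)
      simp only [hL'def]
      by_cases hadj : G.Adj u v
      · simp only [hadj, if_true]
        exact card_erase_lower _ _ _ hv'
      · simp only [hadj, if_false]
        exact hv')
    refine ⟨fun v => if v = u then a else c v, ?_, ?_⟩
    · intro v hv
      by_cases hvu : v = u
      · simp [hvu, ha]
      · simp only [hvu, if_false]
        have := hc1 v (Finset.mem_erase.2 ⟨hvu, hv⟩)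
        simp only [hL'def] at this
        split at this
        · exact Finset.mem_of_mem_erase this
        · exact this
    · intro v hv w hw hadj
      by_cases hvu : v = u <;> by_cases hwu : w = u
      · rw [hvu, hwu] at hadj; exact absurd hadj (G.loopless.irrefl u)
      · subst hvu
        simp only [if_true, hwu, if_false]
        have := hc1 w (Finset.mem_erase.2 ⟨hwu, hw⟩)
        simp only [hL'def, hadj, if_true] at this
        exact fun he => (Finset.ne_of_mem_erase this) he.symm
      · subst hwu
        simp only [hvu, if_false, if_true]
        have := hc1 v (Finset.mem_erase.2 ⟨hvu, hv⟩)
        simp only [hL'def, G.adj_symm hadj, if_true] at this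
        exact Finset.ne_of_mem_erase this
      · simp only [hvu, hwu, if_false]
        exact hc2 v (Finset.mem_erase.2 ⟨hvu, hv⟩) w (Finset.mem_erase.2 ⟨hwu, hw⟩) hadj
  | delSave S f u w hu hw hadj hlt hleg h ih =>
    intro L hpos hL
    have hfw : 0 ≤ f w := hpos w hw
    have hfu := hL u hu
    -- choose a ∈ L u with (a ∉ L w ∨ (L u).card ≤ (L w).card)
    obtain ⟨a, ha, haw⟩ : ∃ a ∈ L u, a ∉ L w ∨ (L u).card ≤ (L w).card := by
      by_cases hsub : L u ⊆ L w
      · have hne : (L u).Nonempty := by rw [← Finset.card_pos]; omega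
        exact ⟨hne.choose, hne.choose_spec, Or.inr (Finset.card_le_card hsub)⟩
      · obtain ⟨a, ha, haw⟩ := Finset.not_subset.1 hsub
        exact ⟨a, ha, Or.inl haw⟩
    set L' : V → Finset ℕ := fun v => if G.Adj u v then (L v).erase a else L v with hL'def
    obtain ⟨c, hc1, hc2⟩ := ih L' hleg (by
      intro v hv
      have hv' := hL v (Finset.mem_of_mem_erase hv)
      simp only [hL'def]
      by_cases hadj' : G.Adj u v
      · by_cases hvw : v = w
        · subst hvw
          rw [if_neg (by simp), if_pos hadj']
          rcases haw with haw | haw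
          · rw [Finset.erase_eq_of_notMem haw]
            exact hv'
          · have h1 : ((L u).card : ℤ) - 1 ≤ ((L v).erase a).card := by
              have := Finset.pred_card_le_card_erase (s := L v) (a := a)
              have h2 : (L u).card ≤ (L v).card := haw
              omega
            omega
        · simp only [hadj', hvw, if_true, and_true, ne_eq, hvw, not_false_iff]
          exact card_erase_lower _ _ _ hv'
      · simp only [hadj', if_false, false_and]
        exact hv')
    refine ⟨fun v => if v = u then a else c v, ?_, ?_⟩
    · intro v hv
      by_cases hvu : v = u
      · simp [hvu, ha]
      · simp only [hvu, if_false]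
        have := hc1 v (Finset.mem_erase.2 ⟨hvu, hv⟩)
        simp only [hL'def] at this
        split at this
        · exact Finset.mem_of_mem_erase this
        · exact this
    · intro v hv w' hw' hadj'
      by_cases hvu : v = u <;> by_cases hwu : w' = u
      · rw [hvu, hwu] at hadj'; exact absurd hadj' (G.loopless.irrefl u)
      · subst hvu
        simp only [if_true, hwu, if_false]
        have := hc1 w' (Finset.mem_erase.2 ⟨hwu, hw'⟩)
        simp only [hL'def, hadj', if_true] at this
        exact fun he => (Finset.ne_of_mem_erase this) he.symm
      · subst hwu
        simp only [hvu, if_false, if_true]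
        have := hc1 v (Finset.mem_erase.2 ⟨hvu, hv⟩)
        simp only [hL'def, G.adj_symm hadj', if_true] at this
        exact Finset.ne_of_mem_erase this
      · simp only [hvu, hwu, if_false]
        exact hc2 v (Finset.mem_erase.2 ⟨hvu, hv⟩) w' (Finset.mem_erase.2 ⟨hwu, hw'⟩) hadj'

/-- Delete always works when values are large. -/
lemma weakDegenOn_of_large (G : SimpleGraph V) :
    ∀ (S : Finset V) (f : V → ℤ), (∀ v ∈ S, (S.card : ℤ) - 1 ≤ f v) → WeakDegenOn G S f := by
  intro S
  induction S using Finset.strongInduction with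
  | _ S ih =>
    intro f hf
    rcases S.eq_empty_or_nonempty with rfl | ⟨u, hu⟩
    · exact .empty f
    · have hcard : (S.erase u).card = S.card - 1 := Finset.card_erase_of_mem hu
      have hS1 : 1 ≤ S.card := Finset.card_pos.2 ⟨u, hu⟩
      refine .delete S f u hu ?_ (ih _ (Finset.erase_ssubset hu) _ ?_)
      · intro v hv
        have hv' := hf v (Finset.mem_of_mem_erase hv)
        have h2 : 2 ≤ S.card :=
          Finset.one_lt_card.2 ⟨u, hu, v, Finset.mem_of_mem_erase hv,
            fun he => (Finset.mem_erase.1 hv).1 he.symm⟩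
        split <;> omega
      · intro v hv
        have hv' := hf v (Finset.mem_of_mem_erase hv)
        have h2 : 2 ≤ S.card :=
          Finset.one_lt_card.2 ⟨u, hu, v, Finset.mem_of_mem_erase hv,
            fun he => (Finset.mem_erase.1 hv).1 he.symm⟩
        rw [hcard]
        split <;> omega

lemma weaklyDegenerate_card (G : SimpleGraph V) [Fintype V] :
    WeaklyDegenerate G (Fintype.card V) := by
  apply weakDegenOn_of_large
  intro v _
  simp [Finset.card_univ]

/-- For every finite simple graph `G`, `χ(G) ≤ wd(G) + 1`. -/
theorem chromaticNumber_le_weakDegeneracy_add_one {V : Type*} [Fintype V] (G : SimpleGraph V) :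
    G.chromaticNumber ≤ (weakDegeneracy G : ℕ∞) + 1 := by
  set d := weakDegeneracy G with hd
  have hne : {n : ℕ | WeaklyDegenerate G n}.Nonempty := ⟨_, weaklyDegenerate_card G⟩
  have hmem : WeaklyDegenerate G d := Nat.sInf_mem hne
  obtain ⟨c, hc1, hc2⟩ := exists_coloring G Finset.univ (fun _ => (d : ℤ)) hmem
    (fun _ => Finset.range (d + 1)) (fun _ _ => Int.natCast_nonneg d)
    (fun v _ => by simp)
  have hcol : G.Colorable (d + 1) := by
    refine ⟨SimpleGraph.Coloring.mk
      (fun v => (⟨c v, by simpa using hc1 v (Finset.mem_univ v)⟩ : Fin (d + 1))) ?_⟩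
    intro v w hadj he
    exact hc2 v (Finset.mem_univ v) w (Finset.mem_univ w) hadj (by
      simpa [Fin.mk.injEq] using he)
  have := hcol.chromaticNumber_le
  calc G.chromaticNumber ≤ ((d + 1 : ℕ) : ℕ∞) := this
    _ = (d : ℕ∞) + 1 := by push_cast; rfl

end WeakDeg
end

section
/- Let G be a finite simple graph that is weakly f-degenerate for a function f : V(G) → ℕ. If g : V(G) → ℕ is a function such that g(u) ≥ f(u) for all vertices u, then G is weakly g-degenerate. -/
open scoped Classical

namespace WeakDeg

variable {V : Type*}

lemma ite_sub_one_le_ite_sub_one {p : Prop} [Decidable p] {a b : ℤ} (h : a ≤ b) :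
    (if p then a - 1 else a) ≤ if p then b - 1 else b := by
  split_ifs <;> omega

/-- Each legal move for `f` stays legal for `g ≥ f`, except that a
`DelSave(u, w)` may lose its precondition `g w < g u`; but then `g w - 1 ≥ g u - 1 ≥ f u - 1 ≥ f w`,
so the plain `Delete(u)` is legal for `g` and still dominates the saved value `f w`. -/
theorem WeakDegenOn.mono {G : SimpleGraph V} {S : Finset V} {f g : V → ℤ}
    (h : WeakDegenOn G S f) (hfg : ∀ v ∈ S, f v ≤ g v) : WeakDegenOn G S g := by
  induction h generalizing g with
  | empty => exact .empty g
  | delete S f u hu hleg _ ih =>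
    have key : ∀ v ∈ S.erase u, (if G.Adj u v then f v - 1 else f v) ≤
        if G.Adj u v then g v - 1 else g v :=
      fun v hv => ite_sub_one_le_ite_sub_one (hfg v (Finset.mem_of_mem_erase hv))
    exact .delete S g u hu (fun v hv => (hleg v hv).trans (key v hv)) (ih key)
  | delSave S f u w hu hw hadj hlt hleg _ ih =>
    by_cases hgw : g w < g u
    · have key : ∀ v ∈ S.erase u, (if G.Adj u v ∧ v ≠ w then f v - 1 else f v) ≤
          if G.Adj u v ∧ v ≠ w then g v - 1 else g v :=
        fun v hv => ite_sub_one_le_ite_sub_one (hfg v (Finset.mem_of_mem_erase hv))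
      exact .delSave S g u w hu hw hadj hgw (fun v hv => (hleg v hv).trans (key v hv)) (ih key)
    · have key : ∀ v ∈ S.erase u, (if G.Adj u v ∧ v ≠ w then f v - 1 else f v) ≤
          if G.Adj u v then g v - 1 else g v := by
        intro v hv
        by_cases hvw : v = w
        · subst hvw
          have := hfg u hu
          simp only [ne_eq, not_true_eq_false, and_false, if_false, if_pos hadj]
          omega
        · simpa only [ne_eq, hvw, not_false_eq_true, and_true] using
            ite_sub_one_le_ite_sub_one (hfg v (Finset.mem_of_mem_erase hv))
      exact .delete S g u hu (fun v hv => (hleg v hv).trans (key v hv)) (ih key)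

/-- Weak degeneracy is monotone: if `G` is weakly `f`-degenerate and `g ≥ f` pointwise,
then `G` is weakly `g`-degenerate. -/
theorem weaklyDegenerateWith_mono {V : Type*} [Fintype V] (G : SimpleGraph V) (f g : V → ℕ)
    (hf : WeaklyDegenerateWith G f) (hfg : ∀ u, f u ≤ g u) :
    WeaklyDegenerateWith G g :=
  hf.mono fun v _ => Int.ofNat_le.mpr (hfg v)

end WeakDeg
end

section
/- Let G be a finite simple graph that is weakly f-degenerate for a function f : V(G) → ℕ. Suppose every vertex u is given a finite set L(u) of colors and every edge uv is assigned a matching C_uv between L(u) and L(v) (a set of pairs in which no color of L(u) and no color of L(v) appears more than once). If |L(u)| ≥ f(u) + 1 for all vertices u, then G admits a proper (L,C)-coloring, i.e., a function φ with φ(u) ∈ L(u) for all u and with the pair (φ(u), φ(v)) not in C_uv for every edge uv. -/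
open scoped Classical

namespace WeakDeg

variable {V : Type*}

/-!
Colour greedily in the order in which the vertices are removed, backwards: the vertex `u` removed
first is coloured last. Fix a colour `c` for `u` and delete from the list of each neighbour `v`
the colour matched to `c` by `C u v`; since `C u v` is a matching, each list loses at most one
colour, which is what `Delete` pays for. For `DelSave(u, w)`, first trim the list of `w` to
`f w + 1` colours; as `f w + 1 < f u + 1 ≤ |L u|`, some colour `c` of `L u` is matched to none of
them, so the list of `w` loses nothing.
-/

section DPColoring

variable {α : Type*}

lemma card_filter_pair_mem_le_one {M : Finset (α × α)}
    (hM : Set.InjOn Prod.fst (M : Set (α × α))) (s : Finset α) (c : α) :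
    (s.filter fun b => (c, b) ∈ M).card ≤ 1 :=
  Finset.card_le_one.2 fun b hb b' hb' => by
    rw [Finset.mem_filter] at hb hb'
    exact congrArg Prod.snd (hM hb.2 hb'.2 rfl)

lemma exists_mem_forall_pair_notMem {M : Finset (α × α)}
    (hM : Set.InjOn Prod.snd (M : Set (α × α))) {A B : Finset α} (hBA : B.card < A.card) :
    ∃ c ∈ A, ∀ b ∈ B, (c, b) ∉ M := by
  set P := M.filter fun p => p.2 ∈ B
  have hP : (P.image Prod.fst).card < A.card := calc
    (P.image Prod.fst).card ≤ P.card := Finset.card_image_le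
    _ = (P.image Prod.snd).card :=
      (Finset.card_image_of_injOn (hM.mono (Finset.coe_subset.2 (Finset.filter_subset _ _)))).symm
    _ ≤ B.card := Finset.card_le_card fun b hb => by
      obtain ⟨p, hp, rfl⟩ := Finset.mem_image.1 hb
      exact (Finset.mem_filter.1 hp).2
    _ < A.card := hBA
  obtain ⟨c, hcA, hcP⟩ := Finset.exists_mem_notMem_of_card_lt_card hP
  exact ⟨c, hcA, fun b hb hcb =>
    hcP (Finset.mem_image.2 ⟨(c, b), Finset.mem_filter.2 ⟨hcb, hb⟩, rfl⟩)⟩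

variable (G : SimpleGraph V) (C : V → V → Finset (α × α))

def IsDPColoringOn (L : V → Finset α) (S : Finset V) (φ : V → α) : Prop :=
  (∀ v ∈ S, φ v ∈ L v) ∧ ∀ u ∈ S, ∀ v ∈ S, G.Adj u v → (φ u, φ v) ∉ C u v

noncomputable def removeConflicts (u : V) (c : α) (L : V → Finset α) (v : V) : Finset α :=
  if G.Adj u v then (L v).filter fun b => (c, b) ∉ C u v else L v

variable {G C}

lemma removeConflicts_subset (u : V) (c : α) (L : V → Finset α) (v : V) :
    removeConflicts G C u c L v ⊆ L v := by
  unfold removeConflicts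
  split_ifs
  exacts [Finset.filter_subset _ _, subset_rfl]

lemma pair_notMem_of_mem_removeConflicts {u v : V} {c b : α} {L : V → Finset α}
    (huv : G.Adj u v) (hb : b ∈ removeConflicts G C u c L v) : (c, b) ∉ C u v := by
  rw [removeConflicts, if_pos huv, Finset.mem_filter] at hb
  exact hb.2

lemma removeConflicts_eq_self {u v : V} {c : α} {L : V → Finset α}
    (hfree : ∀ b ∈ L v, (c, b) ∉ C u v) : removeConflicts G C u c L v = L v := by
  unfold removeConflicts
  split_ifs
  exacts [Finset.filter_true_of_mem hfree, rfl]

lemma le_card_removeConflicts {u v : V} {c : α} {L : V → Finset α} {k : ℤ}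
    (hfst : G.Adj u v → Set.InjOn Prod.fst (C u v : Set (α × α))) (hk : k + 1 ≤ (L v).card) :
    (if G.Adj u v then k - 1 else k) + 1 ≤ (removeConflicts G C u c L v).card := by
  unfold removeConflicts
  split_ifs with huv
  · have hmatched := card_filter_pair_mem_le_one (hfst huv) (L v) c
    have hsplit := Finset.card_filter_add_card_filter_not (s := L v) fun b => (c, b) ∈ C u v
    omega
  · exact hk

lemma IsDPColoringOn.update
    (hsymm : ∀ u v, G.Adj u v → ∀ a b : α, (a, b) ∈ C u v ↔ (b, a) ∈ C v u)
    {L L' : V → Finset α} {S : Finset V} {u : V} {c : α} {φ : V → α}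
    (hφ : IsDPColoringOn G C L' (S.erase u) φ) (hL' : ∀ v, L' v ⊆ L v) (hc : c ∈ L u)
    (hfree : ∀ v, G.Adj u v → ∀ b ∈ L' v, (c, b) ∉ C u v) :
    IsDPColoringOn G C L S (Function.update φ u c) := by
  have hmem : ∀ v ∈ S, v ≠ u → φ v ∈ L' v := fun v hv hvu =>
    hφ.1 v (Finset.mem_erase.2 ⟨hvu, hv⟩)
  refine ⟨fun v hv => ?_, fun x hx y hy hxy => ?_⟩
  · rcases eq_or_ne v u with rfl | hvu
    · simpa using hc
    · rw [Function.update_of_ne hvu]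
      exact hL' v (hmem v hv hvu)
  · rcases eq_or_ne x u with rfl | hxu
    · rw [Function.update_self, Function.update_of_ne hxy.ne']
      exact hfree y hxy _ (hmem y hy hxy.ne')
    rcases eq_or_ne y u with rfl | hyu
    · rw [Function.update_self, Function.update_of_ne hxu, hsymm x y hxy]
      exact hfree x hxy.symm _ (hmem x hx hxu)
    rw [Function.update_of_ne hxu, Function.update_of_ne hyu]
    exact hφ.2 x (Finset.mem_erase.2 ⟨hxu, hx⟩) y (Finset.mem_erase.2 ⟨hyu, hy⟩) hxy

theorem WeakDegenOn.exists_isDPColoringOn [Nonempty α]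
    (hfst : ∀ u v, G.Adj u v → Set.InjOn Prod.fst (C u v : Set (α × α)))
    (hsnd : ∀ u v, G.Adj u v → Set.InjOn Prod.snd (C u v : Set (α × α)))
    (hsymm : ∀ u v, G.Adj u v → ∀ a b : α, (a, b) ∈ C u v ↔ (b, a) ∈ C v u)
    {S : Finset V} {f : V → ℤ} (h : WeakDegenOn G S f) (L : V → Finset α)
    (hf : ∀ v ∈ S, 0 ≤ f v) (hL : ∀ v ∈ S, f v + 1 ≤ (L v).card) :
    ∃ φ, IsDPColoringOn G C L S φ := by
  induction h generalizing L with
  | empty f => exact ⟨fun _ => Classical.arbitrary α, by simp [IsDPColoringOn]⟩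
  | delete S f u hu hleg h ih =>
    obtain ⟨c, hc⟩ : (L u).Nonempty :=
      Finset.card_pos.1 (by have := hf u hu; have := hL u hu; omega)
    obtain ⟨φ, hφ⟩ := ih (removeConflicts G C u c L) hleg fun v hv =>
      le_card_removeConflicts (hfst u v) (hL v (Finset.mem_of_mem_erase hv))
    exact ⟨_, hφ.update hsymm (removeConflicts_subset u c L) hc
      fun v huv _ hb => pair_notMem_of_mem_removeConflicts huv hb⟩
  | delSave S f u w hu hw huw hlt hleg h ih =>
    obtain ⟨Lw, hLw, hLwcard⟩ :=
      Finset.exists_subset_card_eq (s := L w) (n := (f w + 1).toNat) (by have := hL w hw; omega)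
    obtain ⟨c, hc, hcLw⟩ := exists_mem_forall_pair_notMem (hsnd u w huw) (A := L u) (B := Lw)
      (by have := hL u hu; have := hf w hw; omega)
    set L₀ := Function.update L w Lw
    have hL₀ : ∀ v, L₀ v ⊆ L v := by
      intro v
      rcases eq_or_ne v w with rfl | hvw
      · simpa [L₀] using hLw
      · simp [L₀, hvw]
    obtain ⟨φ, hφ⟩ := ih (removeConflicts G C u c L₀) hleg fun v hv => by
      rcases eq_or_ne v w with rfl | hvw
      · rw [removeConflicts_eq_self (by simpa [L₀] using hcLw)]
        simp [L₀, hLwcard]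
      · simpa [hvw] using le_card_removeConflicts (c := c) (hfst u v)
          (by simpa [L₀, hvw] using hL v (Finset.mem_of_mem_erase hv))
    exact ⟨_, hφ.update hsymm (fun v => (removeConflicts_subset u c L₀ v).trans (hL₀ v)) hc
      fun v huv _ hb => pair_notMem_of_mem_removeConflicts huv hb⟩

end DPColoring

theorem weaklyDegenerateWith_DP_colorable_general {V : Type*} [Fintype V] (G : SimpleGraph V)
    (f : V → ℕ) (hf : WeaklyDegenerateWith G f)
    (L : V → Finset ℕ) (C : V → V → Finset (ℕ × ℕ))
    -- `C u v` is a matching: no color of `L u` and no color of `L v` appears more than once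
    (hCmatch : ∀ u v, G.Adj u v → ∀ p ∈ C u v, ∀ q ∈ C u v,
      (p.1 = q.1 → p.2 = q.2) ∧ (p.2 = q.2 → p.1 = q.1))
    -- the matchings on the two orientations of an edge agree
    (hCsymm : ∀ u v, G.Adj u v → ∀ a b : ℕ, (a, b) ∈ C u v ↔ (b, a) ∈ C v u)
    (hL : ∀ u, f u + 1 ≤ (L u).card) :
    ∃ φ : V → ℕ, (∀ u, φ u ∈ L u) ∧ ∀ u v, G.Adj u v → (φ u, φ v) ∉ C u v := by
  obtain ⟨φ, hφL, hφC⟩ := WeakDegenOn.exists_isDPColoringOn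
    (fun u v huv p hp q hq h => Prod.ext h ((hCmatch u v huv p hp q hq).1 h))
    (fun u v huv p hp q hq h => Prod.ext ((hCmatch u v huv p hp q hq).2 h) h)
    hCsymm hf L (fun v _ => Int.natCast_nonneg (f v)) (fun v _ => by exact_mod_cast hL v)
  exact ⟨φ, fun u => hφL u (Finset.mem_univ u),
    fun u v huv => hφC u (Finset.mem_univ u) v (Finset.mem_univ v) huv⟩

/-- If `G` is weakly `f`-degenerate, lists `L` satisfy `|L(u)| ≥ f(u) + 1`, and each edge `uv`
carries a matching `C u v` between `L u` and `L v`, then `G` has a proper `(L, C)`-coloring. -/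
theorem weaklyDegenerateWith_DP_colorable {V : Type*} [Fintype V] (G : SimpleGraph V)
    (f : V → ℕ) (hf : WeaklyDegenerateWith G f)
    (L : V → Finset ℕ) (C : V → V → Finset (ℕ × ℕ))
    -- every pair in the matching `C u v` consists of a color of `L u` and a color of `L v`
    (hCmem : ∀ u v, G.Adj u v → ∀ p ∈ C u v, p.1 ∈ L u ∧ p.2 ∈ L v)
    -- `C u v` is a matching: no color of `L u` and no color of `L v` appears more than once
    (hCmatch : ∀ u v, G.Adj u v → ∀ p ∈ C u v, ∀ q ∈ C u v,
      (p.1 = q.1 → p.2 = q.2) ∧ (p.2 = q.2 → p.1 = q.1))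
    -- the matchings on the two orientations of an edge agree
    (hCsymm : ∀ u v, G.Adj u v → ∀ a b : ℕ, (a, b) ∈ C u v ↔ (b, a) ∈ C v u)
    (hL : ∀ u, f u + 1 ≤ (L u).card) :
    ∃ φ : V → ℕ, (∀ u, φ u ∈ L u) ∧ ∀ u v, G.Adj u v → (φ u, φ v) ∉ C u v :=
  weaklyDegenerateWith_DP_colorable_general G f hf L C hCmatch hCsymm hL

end WeakDeg
end

section
/- Let G be a finite simple graph that is weakly f-degenerate for a function f : V(G) → ℕ. Suppose functions f₁, f₂ : V(G) → ℤ satisfy f₁(u) + f₂(u) = f(u) − 1 for all vertices u. Then there is a partition V(G) = V₁ ⊔ V₂ such that, for each i ∈ {1,2}, the function f_i is nonnegative on V_i and the induced subgraph G[V_i] is weakly f_i-degenerate. -/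
open scoped Classical

namespace WeakDeg

variable {V : Type*}

/-!
Induct along the removal sequence. If the first move removes `u`, split the rest with suitably
adjusted functions and put `u` back on a side `i` with `fᵢ(u) ≥ 0`, replaying the same move
there. Such a side exists since `f₁(u) + f₂(u) = f(u) - 1 ≥ -1`. For `DelSave(u, w)` pick `i`
with `fᵢ(w) < fᵢ(u)`, which exists because `f(w) < f(u)`. If `fᵢ(u) < 0`, then `fᵢ(w) ≤ -2`:
raising `fᵢ(w)` by one still keeps `w` out of side `i`, and the unit taken from the other side
at `w` pays for the `Delete(u)` performed there.
-/

section

variable {G : SimpleGraph V} {S T : Finset V} {f g f₁ f₂ : V → ℤ} {a : ℤ} {u v w : V}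

/-- The values left by `Delete(u)`. -/
noncomputable def afterDelete (G : SimpleGraph V) (f : V → ℤ) (u : V) : V → ℤ :=
  fun v => if G.Adj u v then f v - 1 else f v

/-- The values left by `DelSave(u, w)`. -/
noncomputable def afterDelSave (G : SimpleGraph V) (f : V → ℤ) (u w : V) : V → ℤ :=
  fun v => if G.Adj u v ∧ v ≠ w then f v - 1 else f v

lemma afterDelSave_eq_afterDelete (hvw : v ≠ w) :
    afterDelSave G f u w v = afterDelete G f u v := by
  simp [afterDelSave, afterDelete, hvw]

lemma WeakDegenOn.congr (h : WeakDegenOn G S f) (hfg : Set.EqOn f g S) : WeakDegenOn G S g := by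
  induction h generalizing g with
  | empty => exact .empty g
  | delete S f u hu hleg _ ih =>
    have hfg' : Set.EqOn (afterDelete G f u) (afterDelete G g u) (S.erase u) := fun v hv => by
      simp [afterDelete, hfg (Finset.mem_of_mem_erase hv)]
    exact .delete S g u hu (fun v hv => (hleg v hv).trans_eq (hfg' hv)) (ih hfg')
  | delSave S f u w hu hw hadj hlt hleg _ ih =>
    have hfg' : Set.EqOn (afterDelSave G f u w) (afterDelSave G g u w) (S.erase u) :=
      fun v hv => by simp [afterDelSave, hfg (Finset.mem_of_mem_erase hv)]
    exact .delSave S g u w hu hw hadj (hfg hu ▸ hfg hw ▸ hlt)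
      (fun v hv => (hleg v hv).trans_eq (hfg' hv)) (ih hfg')

lemma WeakDegenOn.insert_of_afterDelete (hu : u ∉ T) (hleg : ∀ v ∈ T, 0 ≤ afterDelete G f u v)
    (h : WeakDegenOn G T (afterDelete G f u)) : WeakDegenOn G (insert u T) f :=
  .delete _ f u (T.mem_insert_self u) (by rwa [T.erase_insert hu]) (by rwa [T.erase_insert hu])

/-- `DelSave(u, w)` may be played even when `w` has already been removed: it is then `Delete(u)`. -/
lemma WeakDegenOn.insert_of_afterDelSave (hu : u ∉ T) (hadj : G.Adj u w) (hlt : f w < f u)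
    (hleg : ∀ v ∈ T, 0 ≤ afterDelSave G f u w v) (h : WeakDegenOn G T (afterDelSave G f u w)) :
    WeakDegenOn G (insert u T) f := by
  by_cases hw : w ∈ T
  · exact .delSave _ f u w (T.mem_insert_self u) (T.mem_insert_of_mem hw) hadj hlt
      (by rwa [T.erase_insert hu]) (by rwa [T.erase_insert hu])
  · have hne : ∀ v ∈ T, v ≠ w := fun v hv hvw => hw (hvw ▸ hv)
    refine insert_of_afterDelete hu (fun v hv => ?_) (h.congr fun v hv => ?_) <;>
      simp only [← afterDelSave_eq_afterDelete (hne v hv), hleg v hv]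

def Splittable (G : SimpleGraph V) (S : Finset V) (f₁ f₂ : V → ℤ) : Prop :=
  ∃ V₁ V₂ : Finset V, Disjoint V₁ V₂ ∧ V₁ ∪ V₂ = S ∧
    ((∀ v ∈ V₁, 0 ≤ f₁ v) ∧ WeakDegenOn G V₁ f₁) ∧
    ((∀ v ∈ V₂, 0 ≤ f₂ v) ∧ WeakDegenOn G V₂ f₂)

namespace Splittable

lemma empty : Splittable G ∅ f₁ f₂ :=
  ⟨∅, ∅, by simp, by simp, ⟨by simp, .empty _⟩, ⟨by simp, .empty _⟩⟩

lemma symm (h : Splittable G S f₁ f₂) : Splittable G S f₂ f₁ := by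
  obtain ⟨V₁, V₂, hd, hun, h₁, h₂⟩ := h
  exact ⟨V₂, V₁, hd.symm, Finset.union_comm V₁ V₂ ▸ hun, h₂, h₁⟩

lemma update_left (h : Splittable G S (Function.update f₁ w a) f₂) (ha : a < 0) :
    Splittable G S f₁ f₂ := by
  obtain ⟨V₁, V₂, hd, hun, ⟨hnn, hV₁⟩, h₂⟩ := h
  have hne : ∀ v ∈ V₁, v ≠ w := fun v hv hvw =>
    ha.not_ge (by simpa [hvw] using hnn v hv)
  refine ⟨V₁, V₂, hd, hun, ⟨fun v hv => ?_, hV₁.congr fun v hv => ?_⟩, h₂⟩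
  · simpa [Function.update_of_ne (hne v hv)] using hnn v hv
  · simp [Function.update_of_ne (hne v hv)]

lemma insert_left (h : Splittable G (S.erase u) g f₂) (hu : u ∈ S) (h0 : 0 ≤ f₁ u)
    (hle : ∀ v, g v ≤ f₁ v)
    (hext : ∀ T, u ∉ T → (∀ v ∈ T, 0 ≤ g v) → WeakDegenOn G T g → WeakDegenOn G (insert u T) f₁) :
    Splittable G S f₁ f₂ := by
  obtain ⟨V₁, V₂, hd, hun, ⟨hnn, hV₁⟩, h₂⟩ := h
  have huV : u ∉ V₁ ∪ V₂ := hun ▸ S.notMem_erase u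
  rw [Finset.mem_union, not_or] at huV
  refine ⟨insert u V₁, V₂, Finset.disjoint_insert_left.mpr ⟨huV.2, hd⟩, ?_, ⟨?_, ?_⟩, h₂⟩
  · rw [Finset.insert_union, hun, Finset.insert_erase hu]
  · simpa [h0] using fun v hv => (hnn v hv).trans (hle v)
  · exact hext V₁ huV.1 hnn hV₁

lemma insert_delete (h : Splittable G (S.erase u) (afterDelete G f₁ u) f₂) (hu : u ∈ S)
    (h0 : 0 ≤ f₁ u) : Splittable G S f₁ f₂ :=
  h.insert_left hu h0 (fun v => by unfold afterDelete; split_ifs <;> omega)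
    fun _ => WeakDegenOn.insert_of_afterDelete

lemma insert_delSave (h : Splittable G (S.erase u) (afterDelSave G f₁ u w) f₂) (hu : u ∈ S)
    (hadj : G.Adj u w) (hlt : f₁ w < f₁ u) (h0 : 0 ≤ f₁ u) : Splittable G S f₁ f₂ :=
  h.insert_left hu h0 (fun v => by unfold afterDelSave; split_ifs <;> omega)
    fun _ hu' => WeakDegenOn.insert_of_afterDelSave hu' hadj hlt

end Splittable

theorem WeakDegenOn.splittable (h : WeakDegenOn G S f) (hf : ∀ v ∈ S, 0 ≤ f v)
    (hsum : ∀ v ∈ S, f₁ v + f₂ v = f v - 1) : Splittable G S f₁ f₂ := by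
  induction h generalizing f₁ f₂ with
  | empty => exact .empty
  | delete S f u hu hleg _ ih =>
    have key {g₁ g₂ : V → ℤ} (hs : ∀ v ∈ S, g₁ v + g₂ v = f v - 1) (h0 : 0 ≤ g₁ u) :
        Splittable G S g₁ g₂ := by
      refine (ih hleg fun v hv => ?_).insert_delete hu h0
      have := hs v (Finset.mem_of_mem_erase hv)
      simp only [afterDelete]
      split_ifs <;> omega
    have := hsum u hu
    have := hf u hu
    rcases (by omega : 0 ≤ f₁ u ∨ 0 ≤ f₂ u) with h0 | h0
    · exact key hsum h0
    · exact (key (fun v hv => by rw [add_comm, hsum v hv]) h0).symm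
  | delSave S f u w hu hw hadj hlt hleg _ ih =>
    have key {g₁ g₂ : V → ℤ} (hs : ∀ v ∈ S, g₁ v + g₂ v = f v - 1) (hlt₁ : g₁ w < g₁ u) :
        Splittable G S g₁ g₂ := by
      by_cases h0 : 0 ≤ g₁ u
      · refine (ih hleg fun v hv => ?_).insert_delSave hu hadj hlt₁ h0
        have := hs v (Finset.mem_of_mem_erase hv)
        simp only [afterDelSave]
        split_ifs <;> omega
      have := hs u hu
      have := hf u hu
      have hsplit : Splittable G (S.erase u) (Function.update g₁ w (g₁ w + 1))
          (afterDelete G g₂ u) := by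
        refine ih hleg fun v hv => ?_
        have := hs v (Finset.mem_of_mem_erase hv)
        by_cases hvw : v = w
        · subst hvw
          simp only [Function.update_self, afterDelete, hadj, ↓reduceIte, add_add_sub_cancel,
            ne_eq, not_true_eq_false, and_false]
          omega
        · simp only [Function.update_of_ne hvw, afterDelete, ne_eq, hvw, not_false_eq_true,
            and_true]
          split_ifs <;> omega
      exact ((hsplit.update_left (by omega)).symm.insert_delete hu (by omega)).symm
    have := hsum u hu
    have := hsum w hw
    rcases (by omega : f₁ w < f₁ u ∨ f₂ w < f₂ u) with hlt₁ | hlt₂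
    · exact key hsum hlt₁
    · exact (key (fun v hv => by rw [add_comm, hsum v hv]) hlt₂).symm

end

/-- Partitioning lemma: if `G` is weakly `f`-degenerate and `f₁ + f₂ = f - 1` pointwise, then
the vertex set can be partitioned into `V₁ ⊔ V₂` so that `fᵢ` is nonnegative on `Vᵢ` and the
induced subgraph `G[Vᵢ]` is weakly `fᵢ`-degenerate, for `i = 1, 2`. -/
theorem weaklyDegenerate_partition {V : Type*} [Fintype V] [DecidableEq V] (G : SimpleGraph V)
    (f : V → ℕ) (hf : WeaklyDegenerateWith G f) (f₁ f₂ : V → ℤ)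
    (hsum : ∀ u, f₁ u + f₂ u = (f u : ℤ) - 1) :
    ∃ V₁ V₂ : Finset V, Disjoint V₁ V₂ ∧ V₁ ∪ V₂ = Finset.univ ∧
      ((∀ v ∈ V₁, 0 ≤ f₁ v) ∧ WeakDegenOn G V₁ f₁) ∧
      ((∀ v ∈ V₂, 0 ≤ f₂ v) ∧ WeakDegenOn G V₂ f₂) := by
  obtain ⟨V₁, V₂, hd, hun, h₁, h₂⟩ :=
    WeakDegenOn.splittable (f₁ := f₁) (f₂ := f₂) hf (fun v _ => Int.natCast_nonneg _)
      fun u _ => hsum u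
  -- `hun` is stated with the classical `DecidableEq V` instance of the definitions above.
  exact ⟨V₁, V₂, hd, by convert hun, h₁, h₂⟩

end WeakDeg
end

section
/- If G is a finite connected simple graph of maximum degree d ≥ 3, then either G is isomorphic to the complete graph K_{d+1} or G is weakly (d−1)-degenerate. -/
open scoped Classical

namespace WeakDeg

variable {V : Type*}

section Infra
set_option linter.unusedSectionVars false

variable (G : SimpleGraph V)

/-- degree within a finset -/
noncomputable def degS (S : Finset V) (v : V) : ℕ := (S.filter (G.Adj v)).card

/-- walk stays in a finset -/
def WalkIn (S : Finset V) {a b : V} (p : G.Walk a b) : Prop := ∀ x ∈ p.support, x ∈ S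

/-- reachability within a finset -/
def ReachIn (S : Finset V) (a b : V) : Prop :=
  a ∈ S ∧ b ∈ S ∧ ∃ p : G.Walk a b, WalkIn G S p

/-- connectivity of the induced subgraph on a finset -/
def ConnIn (S : Finset V) : Prop := ∀ a ∈ S, ∀ b ∈ S, ReachIn G S a b

/-- the component of `a` within `S` -/
noncomputable def compIn (S : Finset V) (a : V) : Finset V := S.filter (ReachIn G S a)

variable {G}

theorem ReachIn.refl {S : Finset V} {a : V} (ha : a ∈ S) : ReachIn G S a a :=
  ⟨ha, ha, SimpleGraph.Walk.nil, by intro x hx; simp at hx; subst hx; exact ha⟩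

theorem ReachIn.symm {S : Finset V} {a b : V} (h : ReachIn G S a b) : ReachIn G S b a := by
  obtain ⟨ha, hb, p, hp⟩ := h
  exact ⟨hb, ha, p.reverse, by intro x hx; apply hp; simpa using hx⟩

theorem ReachIn.trans {S : Finset V} {a b c : V} (h : ReachIn G S a b) (h' : ReachIn G S b c) :
    ReachIn G S a c := by
  obtain ⟨ha, hb, p, hp⟩ := h
  obtain ⟨hb', hc, q, hq⟩ := h'
  refine ⟨ha, hc, p.append q, ?_⟩
  intro x hx
  rw [SimpleGraph.Walk.support_append] at hx
  rcases List.mem_append.1 hx with h1 | h1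
  · exact hp x h1
  · exact hq x (List.mem_of_mem_tail h1)

theorem ReachIn.adj {S : Finset V} {a b : V} (h : G.Adj a b) (ha : a ∈ S) (hb : b ∈ S) :
    ReachIn G S a b := by
  refine ⟨ha, hb, SimpleGraph.Walk.cons h SimpleGraph.Walk.nil, ?_⟩
  intro x hx
  simp at hx
  rcases hx with h1 | h1 <;> subst h1 <;> assumption

theorem ReachIn.mono {S T : Finset V} (hST : S ⊆ T) {a b : V} (h : ReachIn G S a b) :
    ReachIn G T a b := by
  obtain ⟨ha, hb, p, hp⟩ := h
  exact ⟨hST ha, hST hb, p, fun x hx => hST (hp x hx)⟩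

theorem mem_compIn {S : Finset V} {a b : V} : b ∈ compIn G S a ↔ ReachIn G S a b := by
  unfold compIn
  constructor
  · intro h; exact (Finset.mem_filter.1 h).2
  · intro h; exact Finset.mem_filter.2 ⟨h.2.1, h⟩

theorem compIn_subset {S : Finset V} {a : V} : compIn G S a ⊆ S := Finset.filter_subset _ _

theorem self_mem_compIn {S : Finset V} {a : V} (ha : a ∈ S) : a ∈ compIn G S a :=
  mem_compIn.2 (ReachIn.refl ha)

/-- components are closed under adjacency inside S -/
theorem compIn_closed {S : Finset V} {a p q : V} (hp : p ∈ compIn G S a) (hq : q ∈ S)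
    (hadj : G.Adj p q) : q ∈ compIn G S a :=
  mem_compIn.2 ((mem_compIn.1 hp).trans (ReachIn.adj hadj (mem_compIn.1 hp).2.1 hq))

/-- reachability within S from the basepoint happens within the component -/
theorem reachIn_compIn {S : Finset V} {a b : V} (h : ReachIn G S a b) :
    ReachIn G (compIn G S a) a b := by
  obtain ⟨ha, hb, p, hp⟩ := h
  refine ⟨self_mem_compIn ha, ?_, p, ?_⟩
  · exact mem_compIn.2 ⟨ha, hb, p, hp⟩
  · intro x hx
    rw [SimpleGraph.Walk.mem_support_iff_exists_append] at hx
    obtain ⟨q, r, rfl⟩ := hx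
    refine mem_compIn.2 ⟨ha, ?_, q, ?_⟩
    · exact hp x (by rw [SimpleGraph.Walk.support_append]; exact List.mem_append.2 (Or.inl q.end_mem_support))
    · intro y hy
      exact hp y (by rw [SimpleGraph.Walk.support_append]; exact List.mem_append.2 (Or.inl hy))

theorem compIn_congr {S : Finset V} {a b : V} (h : ReachIn G S a b) :
    compIn G S a = compIn G S b := by
  ext u
  simp only [mem_compIn]
  exact ⟨fun h' => h.symm.trans h', fun h' => h.trans h'⟩

/-- if a walk in T starts in F and ends outside, there is an edge leaving F -/
theorem exit_edge {T F : Finset V} {a b : V} (hre : ReachIn G T a b) (ha : a ∈ F) (hb : b ∉ F) :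
    ∃ p ∈ F, ∃ q ∈ T, q ∉ F ∧ G.Adj p q := by
  obtain ⟨_, _, p, hp⟩ := hre
  revert hp ha
  induction p with
  | nil => intro ha hp; exact absurd ha hb
  | @cons u s c h q ih =>
    intro ha hp
    by_cases hs : s ∈ F
    · exact ih hb (hp s (by simp [SimpleGraph.Walk.support_cons, q.start_mem_support]))
        (hp c (by simp [SimpleGraph.Walk.support_cons, q.end_mem_support])) hs
        (fun x hx => hp x (by simp [SimpleGraph.Walk.support_cons]; right; exact hx))
    · exact ⟨u, ha, s, hp s (by simp [SimpleGraph.Walk.support_cons, q.start_mem_support]), hs, h⟩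

/-- Key rerouting lemma: if every edge into `F` (within `T`) comes from `c`, then
walks avoiding only endpoints in `F` can be rerouted to avoid `F`, possibly restarting at `c`. -/
theorem reach_avoid {T F : Finset V} {c : V}
    (hF : ∀ p q, p ∈ T → q ∈ T → G.Adj p q → q ∈ F → p ∈ F ∨ p = c) :
    ∀ {a b : V} (w : G.Walk a b), WalkIn G T w → b ∉ F →
      ((a ∉ F → ReachIn G (T \ F) a b) ∧ (a ∈ F → ReachIn G (T \ F) c b)) := by
  intro a b w
  induction w with
  | nil =>
    intro hw hb
    constructor
    · intro ha
      exact ReachIn.refl (Finset.mem_sdiff.2 ⟨hw _ (by simp), hb⟩)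
    · intro ha; exact absurd ha hb
  | @cons u s d h q ih =>
    intro hw hb
    have huT : u ∈ T := hw u (by simp [SimpleGraph.Walk.support_cons])
    have hsT : s ∈ T := hw s (by simp [SimpleGraph.Walk.support_cons, q.start_mem_support])
    have hqT : WalkIn G T q := fun x hx => hw x (by simp [SimpleGraph.Walk.support_cons]; right; exact hx)
    have IH := ih hqT hb
    by_cases hs : s ∈ F
    · have IH2 := IH.2 hs
      constructor
      · intro hu
        rcases hF u s huT hsT h hs with h1 | h1
        · exact absurd h1 hu
        · subst h1; exact IH2
      · intro _; exact IH2
    · have IH1 := IH.1 hs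
      constructor
      · intro hu
        exact (ReachIn.adj h (Finset.mem_sdiff.2 ⟨huT, hu⟩) (Finset.mem_sdiff.2 ⟨hsT, hs⟩)).trans IH1
      · intro hu
        rcases hF s u hsT huT h.symm hu with h1 | h1
        · exact absurd h1 hs
        · subst h1; exact IH1

theorem reach_avoid' {T F : Finset V} {c : V}
    (hF : ∀ p q, p ∈ T → q ∈ T → G.Adj p q → q ∈ F → p ∈ F ∨ p = c)
    {a b : V} (h : ReachIn G T a b) (ha : a ∉ F) (hb : b ∉ F) : ReachIn G (T \ F) a b := by
  obtain ⟨_, _, w, hw⟩ := h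
  exact (reach_avoid hF w hw hb).1 ha

end Infra

section Dist

set_option linter.unusedSectionVars false

variable {G : SimpleGraph V}

/-- distance within a finset -/
noncomputable def dIn (G : SimpleGraph V) (S : Finset V) (a b : V) : ℕ :=
  sInf {n | ∃ p : G.Walk a b, WalkIn G S p ∧ p.length = n}

theorem dIn_exists {S : Finset V} {a b : V} (h : ReachIn G S a b) :
    ∃ p : G.Walk a b, WalkIn G S p ∧ p.length = dIn G S a b := by
  obtain ⟨_, _, p, hp⟩ := h
  have hne : {n | ∃ p : G.Walk a b, WalkIn G S p ∧ p.length = n}.Nonempty := ⟨p.length, p, hp, rfl⟩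
  exact Nat.sInf_mem hne

theorem dIn_le {S : Finset V} {a b : V} (p : G.Walk a b) (hp : WalkIn G S p) :
    dIn G S a b ≤ p.length := Nat.sInf_le ⟨p, hp, rfl⟩

theorem dIn_self {S : Finset V} {a : V} (ha : a ∈ S) : dIn G S a a = 0 := by
  have hw : WalkIn G S (SimpleGraph.Walk.nil (u := a) (G := G)) := by
    intro x hx
    rw [SimpleGraph.Walk.support_nil, List.mem_singleton] at hx
    subst hx; exact ha
  have := dIn_le _ hw
  simpa using this

theorem eq_of_dIn_zero {S : Finset V} {a b : V} (h : ReachIn G S a b)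
    (h0 : dIn G S a b = 0) : a = b := by
  obtain ⟨p, hp, hl⟩ := dIn_exists h
  rw [h0] at hl
  exact (SimpleGraph.Walk.eq_of_length_eq_zero hl)

end Dist

section WD

set_option linter.unusedSectionVars false

variable {G : SimpleGraph V}

theorem wd_congr : ∀ {S : Finset V} {f : V → ℤ}, WeakDegenOn G S f →
    ∀ {g : V → ℤ}, (∀ v ∈ S, f v = g v) → WeakDegenOn G S g := by
  intro S f h
  induction h with
  | empty f => intro g _; exact WeakDegenOn.empty g
  | delete S f u hu hleg h ih =>
    intro g hg
    refine WeakDegenOn.delete S g u hu ?_ (ih ?_)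
    · intro v hv
      have h1 := hleg v hv
      have h2 := hg v (Finset.mem_of_mem_erase hv)
      by_cases hadj : G.Adj u v
      · rw [if_pos hadj] at h1 ⊢; rw [← h2]; exact h1
      · rw [if_neg hadj] at h1 ⊢; rw [← h2]; exact h1
    · intro v hv
      have h2 := hg v (Finset.mem_of_mem_erase hv)
      show (if G.Adj u v then f v - 1 else f v) = (if G.Adj u v then g v - 1 else g v)
      rw [h2]
  | delSave S f u w hu hw hadj hlt hleg h ih =>
    intro g hg
    refine WeakDegenOn.delSave S g u w hu hw hadj ?_ ?_ (ih ?_)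
    · rw [← hg u hu, ← hg w hw]; exact hlt
    · intro v hv
      have h1 := hleg v hv
      have h2 := hg v (Finset.mem_of_mem_erase hv)
      by_cases hc : G.Adj u v ∧ v ≠ w
      · rw [if_pos hc] at h1 ⊢; rw [← h2]; exact h1
      · rw [if_neg hc] at h1 ⊢; rw [← h2]; exact h1
    · intro v hv
      have h2 := hg v (Finset.mem_of_mem_erase hv)
      show (if G.Adj u v ∧ v ≠ w then f v - 1 else f v) = (if G.Adj u v ∧ v ≠ w then g v - 1 else g v)
      rw [h2]

theorem degS_pos_of_adj {S : Finset V} {v w : V} (hw : w ∈ S) (h : G.Adj v w) :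
    1 ≤ degS G S v := by
  have : w ∈ S.filter (G.Adj v) := Finset.mem_filter.2 ⟨hw, h⟩
  exact Finset.card_pos.2 ⟨w, this⟩ 

theorem degS_two_of_adj {S : Finset V} {v w w' : V} (hw : w ∈ S) (hw' : w' ∈ S) (hne : w ≠ w')
    (h : G.Adj v w) (h' : G.Adj v w') : 2 ≤ degS G S v := by
  have h1 : ({w, w'} : Finset V) ⊆ S.filter (G.Adj v) := by
    intro x hx
    rcases Finset.mem_insert.1 hx with rfl | hx
    · exact Finset.mem_filter.2 ⟨hw, h⟩
    · rw [Finset.mem_singleton] at hx; subst hx; exact Finset.mem_filter.2 ⟨hw', h'⟩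
  calc 2 = ({w, w'} : Finset V).card := by rw [Finset.card_insert_of_notMem (by simpa using hne), Finset.card_singleton]
  _ ≤ _ := Finset.card_le_card h1

theorem degS_erase_adj {S : Finset V} {u v : V} (hu : u ∈ S) (h : G.Adj v u) :
    degS G (S.erase u) v + 1 = degS G S v := by
  unfold degS
  rw [Finset.filter_erase]
  rw [Finset.card_erase_of_mem (Finset.mem_filter.2 ⟨hu, h⟩)]
  have : 1 ≤ (S.filter (G.Adj v)).card := degS_pos_of_adj hu h
  omega

theorem degS_erase_nonadj {S : Finset V} {u v : V} (h : ¬ G.Adj v u) :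
    degS G (S.erase u) v = degS G S v := by
  unfold degS
  congr 1
  ext x
  simp only [Finset.mem_filter, Finset.mem_erase]
  constructor
  · rintro ⟨⟨_, h1⟩, h2⟩; exact ⟨h1, h2⟩
  · rintro ⟨h1, h2⟩
    refine ⟨⟨?_, h1⟩, h2⟩
    rintro rfl; exact h h2

theorem degS_mono {S T : Finset V} (h : S ⊆ T) (v : V) : degS G S v ≤ degS G T v :=
  Finset.card_le_card (Finset.filter_subset_filter _ h)

end WD

section LemC

set_option linter.unusedSectionVars false

variable {G : SimpleGraph V}

theorem reach_nbr {S : Finset V} {a b : V} (h : ReachIn G S a b) (hne : a ≠ b) :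
    ∃ w ∈ S, G.Adj a w := by
  obtain ⟨ha, hb, p, hp⟩ := h
  cases p with
  | nil => exact absurd rfl hne
  | cons h q =>
    exact ⟨_, hp _ (by simp [SimpleGraph.Walk.support_cons, q.start_mem_support]), h⟩

/-- Lemma C: a connected graph with all values ≥ deg − 1 and a root with value ≥ deg is
weakly degenerate. -/
theorem lemC : ∀ (n : ℕ) (S : Finset V) (f : V → ℤ) (r : V), S.card ≤ n → ConnIn G S →
    r ∈ S → (∀ v ∈ S, (degS G S v : ℤ) - 1 ≤ f v) → ((degS G S r : ℤ) ≤ f r) →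
    WeakDegenOn G S f := by
  intro n
  induction n with
  | zero =>
    intro S f r hcard _ hr _ _
    rw [Nat.le_zero, Finset.card_eq_zero] at hcard
    subst hcard
    exact absurd hr (by simp)
  | succ n IH =>
    intro S f r hcard hconn hr hdef hroot
    by_cases hsing : ∀ v ∈ S, v = r
    · -- S = {r}
      have herase : S.erase r = ∅ := by
        rw [Finset.eq_empty_iff_forall_notMem]
        intro x hx
        exact (Finset.mem_erase.1 hx).1 (hsing x (Finset.mem_of_mem_erase hx))
      refine WeakDegenOn.delete S f r hr ?_ ?_
      · intro v hv; rw [herase] at hv; exact absurd hv (by simp)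
      · rw [herase]; exact WeakDegenOn.empty _
    · push_neg at hsing
      obtain ⟨u', hu', hu'r⟩ := hsing
      -- farthest vertex u
      obtain ⟨u, hu, hmax⟩ := Finset.exists_max_image S (dIn G S r) ⟨r, hr⟩
      have hur : u ≠ r := by
        intro h; subst h
        have h1 : dIn G S u u' ≠ 0 := fun h0 => hu'r.symm (eq_of_dIn_zero (hconn u hu u' hu') h0)
        have h2 := hmax u' hu'
        rw [dIn_self hu] at h2
        omega
      have hrS' : r ∈ S.erase u := Finset.mem_erase.2 ⟨fun h => hur h.symm, hr⟩
      -- reachability in S.erase u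
      have hKr : ∀ v ∈ S.erase u, ReachIn G (S.erase u) r v := by
        intro v hv
        obtain ⟨hvu, hvS⟩ := Finset.mem_erase.1 hv
        obtain ⟨p, hp, hlen⟩ := dIn_exists (hconn r hr v hvS)
        have hup : u ∉ p.support := by
          intro hmem
          rw [SimpleGraph.Walk.mem_support_iff_exists_append] at hmem
          obtain ⟨q, q2, rfl⟩ := hmem
          have hq : WalkIn G S q := by
            intro x hx
            exact hp x (by rw [SimpleGraph.Walk.support_append]; exact List.mem_append.2 (Or.inl hx))
          have h1 : dIn G S r u ≤ q.length := dIn_le q hq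
          have h2 : q2.length ≠ 0 := by
            intro h0
            exact hvu (SimpleGraph.Walk.eq_of_length_eq_zero h0).symm
          have h3 := hmax v hvS
          rw [← hlen, SimpleGraph.Walk.length_append] at h3
          omega
        refine ⟨hrS', hv, p, ?_⟩
        intro x hx
        exact Finset.mem_erase.2 ⟨fun h => hup (h ▸ hx), hp x hx⟩
      have hnbr : ∀ v ∈ S, ∃ w ∈ S, G.Adj v w := by
        intro v hvS
        by_cases hvr : v = r
        · subst hvr
          obtain ⟨w, hw, hadj⟩ := reach_nbr (hconn v hvS u hu) (fun h => hur h.symm)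
          exact ⟨w, hw, hadj⟩
        · obtain ⟨w, hw, hadj⟩ := reach_nbr (hconn v hvS r hr) hvr
          exact ⟨w, hw, hadj⟩
      have hdeg1 : ∀ v ∈ S, 1 ≤ degS G S v := by
        intro v hvS
        obtain ⟨w, hw, hadj⟩ := hnbr v hvS
        exact degS_pos_of_adj hw hadj
      -- second neighbor for v adjacent to u, v ≠ r
      have hdeg2 : ∀ v ∈ S.erase u, G.Adj u v → v ≠ r → 2 ≤ degS G S v := by
        intro v hv hadj hvr
        obtain ⟨w, hw, hadjw⟩ := reach_nbr ((hKr v hv).symm) hvr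
        obtain ⟨hwu, hwS⟩ := Finset.mem_erase.1 hw
        exact degS_two_of_adj hu hwS (fun h => hwu h.symm) hadj.symm hadjw
      refine WeakDegenOn.delete S f u hu ?_ ?_
      · intro v hv
        obtain ⟨hvu, hvS⟩ := Finset.mem_erase.1 hv
        by_cases hadj : G.Adj u v
        · rw [if_pos hadj]
          by_cases hvr : v = r
          · subst hvr
            have : (1 : ℤ) ≤ degS G S v := by exact_mod_cast degS_pos_of_adj hu hadj.symm
            omega
          · have h2 : (2 : ℤ) ≤ degS G S v := by exact_mod_cast hdeg2 v hv hadj hvr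
            have := hdef v hvS
            omega
        · rw [if_neg hadj]
          have h1 : (1 : ℤ) ≤ degS G S v := by exact_mod_cast hdeg1 v hvS
          have := hdef v hvS
          omega
      · refine IH (S.erase u) _ r ?_ ?_ hrS' ?_ ?_
        · have := Finset.card_erase_of_mem hu
          omega
        · intro a ha b hb
          exact ((hKr a ha).symm).trans (hKr b hb)
        · intro v hv
          obtain ⟨hvu, hvS⟩ := Finset.mem_erase.1 hv
          by_cases hadj : G.Adj u v
          · rw [if_pos hadj]
            have hd := degS_erase_adj (G := G) hu hadj.symm
            have := hdef v hvS
            have : ((degS G (S.erase u) v : ℤ)) + 1 = degS G S v := by exact_mod_cast hd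
            omega
          · rw [if_neg hadj]
            have hd := degS_erase_nonadj (G := G) (S := S) (u := u) (v := v) (fun h => hadj h.symm)
            have : ((degS G (S.erase u) v : ℤ)) = degS G S v := by exact_mod_cast hd
            have := hdef v hvS
            omega
        · by_cases hadj : G.Adj u r
          · rw [if_pos hadj]
            have hd := degS_erase_adj (G := G) hu hadj.symm
            have : ((degS G (S.erase u) r : ℤ)) + 1 = degS G S r := by exact_mod_cast hd
            omega
          · rw [if_neg hadj]
            have hd := degS_erase_nonadj (G := G) (S := S) (u := u) (v := r) (fun h => hadj h.symm)
            have : ((degS G (S.erase u) r : ℤ)) = degS G S r := by exact_mod_cast hd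
            omega

end LemC

section Phase

set_option linter.unusedSectionVars false

variable {G : SimpleGraph V}

theorem sdiff_erase_erase {S A : Finset V} (u : V) (hu : u ∈ A) :
    (S.erase u) \ (A.erase u) = S \ A := by
  ext x
  simp only [Finset.mem_sdiff, Finset.mem_erase]
  constructor
  · rintro ⟨⟨hxu, hxS⟩, hx2⟩
    refine ⟨hxS, fun hxA => hx2 ⟨hxu, hxA⟩⟩
  · rintro ⟨hxS, hxA⟩
    have hxu : x ≠ u := fun h => hxA (h ▸ hu)
    exact ⟨⟨hxu, hxS⟩, fun h => hxA h.2⟩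

/-- Phase lemma: deleting a set A of vertices, each with a "parent" of smaller rank, while
every kept vertex adjacent to A keeps a neighbor. All-deficient value functions. -/
theorem phase : ∀ (n : ℕ) (S A : Finset V), A.card ≤ n → A ⊆ S → ∀ (rank : V → ℕ),
    (∀ u ∈ A, ∃ p ∈ S, G.Adj u p ∧ (p ∈ A → rank p < rank u)) →
    (∀ p ∈ S, p ∉ A → (∃ a ∈ A, G.Adj p a) → ∃ q ∈ S, q ∉ A ∧ G.Adj p q) →
    (∀ v ∈ S, ∃ q ∈ S, G.Adj v q) →
    WeakDegenOn G (S \ A) (fun v => (degS G (S \ A) v : ℤ) - 1) →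
    WeakDegenOn G S (fun v => (degS G S v : ℤ) - 1) := by
  intro n
  induction n with
  | zero =>
    intro S A hcard _ _ _ _ _ h
    rw [Nat.le_zero, Finset.card_eq_zero] at hcard
    subst hcard
    rwa [Finset.sdiff_empty] at h
  | succ n IH =>
    intro S A hcard hsub rank h1 h2 h3 h
    by_cases hA : A = ∅
    · subst hA; rwa [Finset.sdiff_empty] at h
    · obtain ⟨u, hu, hmax⟩ := Finset.exists_max_image A rank (Finset.nonempty_of_ne_empty hA)
      have huS : u ∈ S := hsub hu
      -- parent of an A vertex is never u
      have hpar : ∀ v ∈ A, ∃ p ∈ S, p ≠ u ∧ G.Adj v p ∧ (p ∈ A → rank p < rank v) := by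
        intro v hv
        obtain ⟨p, hpS, hadj, hrk⟩ := h1 v hv
        refine ⟨p, hpS, ?_, hadj, hrk⟩
        intro hpu; subst hpu
        have := hrk hu
        have := hmax v hv
        omega
      refine WeakDegenOn.delete S _ u huS ?_ ?_
      · intro v hv
        obtain ⟨hvu, hvS⟩ := Finset.mem_erase.1 hv
        by_cases hadj : G.Adj u v
        · rw [if_pos hadj]
          have hdeg2 : 2 ≤ degS G S v := by
            by_cases hvA : v ∈ A
            · obtain ⟨p, hpS, hpu, hadjp, _⟩ := hpar v hvA
              exact degS_two_of_adj huS hpS (Ne.symm hpu) hadj.symm hadjp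
            · obtain ⟨q, hqS, hqA, hadjq⟩ := h2 v hvS hvA ⟨u, hu, hadj.symm⟩
              have hqu : u ≠ q := fun hh => hqA (hh ▸ hu)
              exact degS_two_of_adj huS hqS hqu hadj.symm hadjq
          have : (2 : ℤ) ≤ degS G S v := by exact_mod_cast hdeg2
          omega
        · rw [if_neg hadj]
          obtain ⟨q, hqS, hadjq⟩ := h3 v hvS
          have : (1 : ℤ) ≤ degS G S v := by exact_mod_cast degS_pos_of_adj hqS hadjq
          omega
      · have hrec : WeakDegenOn G (S.erase u)
            (fun v => (degS G (S.erase u) v : ℤ) - 1) := by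
          refine IH (S.erase u) (A.erase u) ?_ ?_ rank ?_ ?_ ?_ ?_
          · have := Finset.card_erase_of_mem hu; omega
          · exact fun x hx => Finset.mem_erase.2
              ⟨(Finset.mem_erase.1 hx).1, hsub (Finset.mem_of_mem_erase hx)⟩
          · intro v hv
            obtain ⟨hvu, hvA⟩ := Finset.mem_erase.1 hv
            obtain ⟨p, hpS, hpu, hadjp, hrk⟩ := hpar v hvA
            exact ⟨p, Finset.mem_erase.2 ⟨hpu, hpS⟩, hadjp,
              fun hp => hrk (Finset.mem_of_mem_erase hp)⟩
          · intro p hp hpA hex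
            obtain ⟨hpu, hpS⟩ := Finset.mem_erase.1 hp
            have hpA' : p ∉ A := fun hh => hpA (Finset.mem_erase.2 ⟨hpu, hh⟩)
            obtain ⟨a, ha, hadja⟩ := hex
            obtain ⟨q, hqS, hqA, hadjq⟩ := h2 p hpS hpA'
              ⟨a, Finset.mem_of_mem_erase ha, hadja⟩
            have hqu : q ≠ u := fun hh => hqA (hh ▸ hu)
            exact ⟨q, Finset.mem_erase.2 ⟨hqu, hqS⟩,
              fun hh => hqA (Finset.mem_of_mem_erase hh), hadjq⟩
          · intro v hv
            obtain ⟨hvu, hvS⟩ := Finset.mem_erase.1 hv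
            by_cases hvA : v ∈ A
            · obtain ⟨p, hpS, hpu, hadjp, _⟩ := hpar v hvA
              exact ⟨p, Finset.mem_erase.2 ⟨hpu, hpS⟩, hadjp⟩
            · by_cases hadj : G.Adj v u
              · obtain ⟨q, hqS, hqA, hadjq⟩ := h2 v hvS hvA ⟨u, hu, hadj⟩
                have hqu : q ≠ u := fun hh => hqA (hh ▸ hu)
                exact ⟨q, Finset.mem_erase.2 ⟨hqu, hqS⟩, hadjq⟩
              · obtain ⟨q, hqS, hadjq⟩ := h3 v hvS
                have hqu : q ≠ u := fun hh => hadj (hh ▸ hadjq)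
                exact ⟨q, Finset.mem_erase.2 ⟨hqu, hqS⟩, hadjq⟩
          · rw [sdiff_erase_erase u hu]; exact h
        refine wd_congr hrec ?_
        intro v hv
        obtain ⟨hvu, hvS⟩ := Finset.mem_erase.1 hv
        by_cases hadj : G.Adj u v
        · rw [if_pos hadj]
          have hd := degS_erase_adj (G := G) huS hadj.symm
          have : ((degS G (S.erase u) v : ℤ)) + 1 = degS G S v := by exact_mod_cast hd
          omega
        · rw [if_neg hadj]
          have hd := degS_erase_nonadj (G := G) (S := S) (u := u) (v := v)
            (fun hh => hadj hh.symm)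
          have : ((degS G (S.erase u) v : ℤ)) = degS G S v := by exact_mod_cast hd
          omega

/-- One DelSave on an unequal adjacent pair, then Lemma C. -/
theorem nc (S : Finset V) (hconn : ConnIn G S) (a c : V) (ha : a ∈ S) (hc : c ∈ S)
    (hadj : G.Adj a c) (hdeg : degS G S c < degS G S a) (hconn2 : ConnIn G (S.erase a)) :
    WeakDegenOn G S (fun v => (degS G S v : ℤ) - 1) := by
  have hca : c ≠ a := fun h => G.loopless.irrefl a (h ▸ hadj.symm)
  have hcS' : c ∈ S.erase a := Finset.mem_erase.2 ⟨hca, hc⟩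
  refine WeakDegenOn.delSave S _ a c ha hc hadj ?_ ?_ ?_
  · have h1 : (degS G S c : ℤ) < degS G S a := by exact_mod_cast hdeg
    omega
  · intro v hv
    obtain ⟨hva, hvS⟩ := Finset.mem_erase.1 hv
    by_cases hcond : G.Adj a v ∧ v ≠ c
    · rw [if_pos hcond]
      obtain ⟨w, hw, hadjw⟩ := reach_nbr (hconn2 v hv c hcS') hcond.2
      have hwa : a ≠ w := fun hh => (Finset.mem_erase.1 hw).1 hh.symm
      have h2 : 2 ≤ degS G S v :=
        degS_two_of_adj ha (Finset.mem_of_mem_erase hw) hwa hcond.1.symm hadjw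
      have : (2 : ℤ) ≤ degS G S v := by exact_mod_cast h2
      omega
    · rw [if_neg hcond]
      obtain ⟨w, hw, hadjw⟩ := reach_nbr (hconn v hvS a ha) hva
      have : (1 : ℤ) ≤ degS G S v := by exact_mod_cast degS_pos_of_adj hw hadjw
      omega
  · refine lemC (S.erase a).card (S.erase a) _ c le_rfl hconn2 hcS' ?_ ?_
    · intro v hv
      obtain ⟨hva, hvS⟩ := Finset.mem_erase.1 hv
      by_cases hcond : G.Adj a v ∧ v ≠ c
      · rw [if_pos hcond]
        have hd := degS_erase_adj (G := G) ha hcond.1.symm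
        have : ((degS G (S.erase a) v : ℤ)) + 1 = degS G S v := by exact_mod_cast hd
        omega
      · rw [if_neg hcond]
        by_cases hadjv : G.Adj a v
        · have hvc : v = c := by
            by_contra hne
            exact hcond ⟨hadjv, hne⟩
          subst hvc
          have hd := degS_erase_adj (G := G) ha hadjv.symm
          have : ((degS G (S.erase a) v : ℤ)) + 1 = degS G S v := by exact_mod_cast hd
          omega
        · have hd := degS_erase_nonadj (G := G) (S := S) (u := a) (v := v)
            (fun hh => hadjv hh.symm)
          have : ((degS G (S.erase a) v : ℤ)) = degS G S v := by exact_mod_cast hd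
          omega
    · have hcond : ¬ (G.Adj a c ∧ c ≠ c) := by simp
      rw [if_neg hcond]
      have hd := degS_erase_adj (G := G) ha hadj.symm
      have : ((degS G (S.erase a) c : ℤ)) + 1 = degS G S c := by exact_mod_cast hd
      omega

end Phase

section Frag

set_option linter.unusedSectionVars false

variable {G : SimpleGraph V}

theorem comp_closed_strong {X : Finset V} {v w p q : V}
    (hp : p ∈ compIn G (X.erase v) w) (hq : q ∈ X) (hadj : G.Adj p q) :
    q ∈ compIn G (X.erase v) w ∨ q = v := by
  by_cases hqv : q = v
  · exact Or.inr hqv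
  · exact Or.inl (compIn_closed hp (Finset.mem_erase.2 ⟨hqv, hq⟩) hadj)

theorem comp_touch {X : Finset V} (hX : ConnIn G X) {v w : V} (hv : v ∈ X) (hw : w ∈ X.erase v) :
    ∃ p ∈ compIn G (X.erase v) w, G.Adj p v := by
  have hre : ReachIn G X w v := hX w (Finset.mem_of_mem_erase hw) v hv
  have hwF : w ∈ compIn G (X.erase v) w := self_mem_compIn hw
  have hvF : v ∉ compIn G (X.erase v) w := fun h =>
    (Finset.mem_erase.1 (compIn_subset h)).1 rfl
  obtain ⟨p, hp, q, hqX, hqF, hadj⟩ := exit_edge hre hwF hvF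
  rcases comp_closed_strong hp hqX hadj with h | h
  · exact absurd h hqF
  · exact ⟨p, hp, h ▸ hadj⟩

theorem missing_comp {T : Finset V} (hnc : ¬ ConnIn G T) {c : V} (hc : c ∈ T) :
    ∃ w ∈ T, ¬ ReachIn G T c w := by
  unfold ConnIn at hnc
  push_neg at hnc
  obtain ⟨s, hs, t, ht, hst⟩ := hnc
  by_cases h1 : ReachIn G T c s
  · refine ⟨t, ht, fun h2 => hst (h1.symm.trans h2)⟩
  · exact ⟨s, hs, h1⟩

theorem comp_reach_within {X : Finset V} {w p u : V} (hp : p ∈ compIn G X w)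
    (hu : u ∈ compIn G X w) : ReachIn G (compIn G X w) p u := by
  have h1 : compIn G X w = compIn G X p := compIn_congr (mem_compIn.1 hp)
  rw [h1] at hu ⊢
  exact reachIn_compIn (mem_compIn.1 hu)

theorem frag_core (H : Finset V) (a : V) (hH : ConnIn G H)
    (hport : ∀ v ∈ H, ∀ w ∈ H.erase v, ∃ p, p ∈ compIn G (H.erase v) w ∧ G.Adj a p)
    (c1 : V) (F1 : Finset V) (hc1H : c1 ∈ H) (w1 : V) (hw1 : w1 ∈ H.erase c1)
    (hF1 : F1 = compIn G (H.erase c1) w1)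
    (hmin : ∀ v F, v ∈ H → (∃ w ∈ H.erase v, F = compIn G (H.erase v) w) →
      (∃ b ∈ H.erase v, b ∉ F) → F1.card ≤ F.card)
    (b1 : V) (hb1 : b1 ∈ H.erase c1) (hb1F : b1 ∉ F1)
    (v2 : V) (F2 : Finset V) (hv2H : v2 ∈ H) (w2 : V) (hw2 : w2 ∈ H.erase v2)
    (hF2 : F2 = compIn G (H.erase v2) w2)
    (hF2K : F2 ⊆ compIn G (H.erase c1) b1)
    (hmin2 : ∀ v F, v ∈ H → (∃ w ∈ H.erase v, F = compIn G (H.erase v) w) →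
      (∃ b ∈ H.erase v, b ∉ F) → F ⊆ compIn G (H.erase c1) b1 → F2.card ≤ F.card) :
    ∃ y' z', y' ∈ H ∧ z' ∈ H ∧ G.Adj a y' ∧ G.Adj a z' ∧ ¬ G.Adj y' z' ∧ y' ≠ z' ∧
      ConnIn G ((H.erase y').erase z') := by
  classical
  set K1 : Finset V := compIn G (H.erase c1) b1 with hK1
  have hF1sub : F1 ⊆ H.erase c1 := hF1 ▸ compIn_subset
  have hK1sub : K1 ⊆ H.erase c1 := compIn_subset
  have hF2sub : F2 ⊆ H.erase v2 := hF2 ▸ compIn_subset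
  have hdisj : ∀ x, x ∈ F1 → x ∉ K1 := by
    intro x hx1 hx2
    have h1 : ReachIn G (H.erase c1) w1 x := mem_compIn.1 (hF1 ▸ hx1)
    have h2 : ReachIn G (H.erase c1) b1 x := mem_compIn.1 hx2
    exact hb1F (hF1 ▸ mem_compIn.2 (h1.trans h2.symm))
  have hc1K1 : c1 ∉ K1 := fun h => (Finset.mem_erase.1 (hK1sub h)).1 rfl
  have hc1F1 : c1 ∉ F1 := fun h => (Finset.mem_erase.1 (hF1sub h)).1 rfl
  have hF1closed : ∀ p q, p ∈ F1 → q ∈ H → G.Adj p q → q ∈ F1 ∨ q = c1 := by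
    intro p q hp hq hadj
    rcases comp_closed_strong (hF1 ▸ hp) hq hadj with h | h
    · exact Or.inl (by rw [hF1]; exact h)
    · exact Or.inr h
  have hK1closed : ∀ p q, p ∈ K1 → q ∈ H → G.Adj p q → q ∈ K1 ∨ q = c1 := by
    intro p q hp hq hadj
    exact comp_closed_strong hp hq hadj
  have hF2closed : ∀ p q, p ∈ F2 → q ∈ H → G.Adj p q → q ∈ F2 ∨ q = v2 := by
    intro p q hp hq hadj
    rcases comp_closed_strong (hF2 ▸ hp) hq hadj with h | h
    · exact Or.inl (by rw [hF2]; exact h)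
    · exact Or.inr h
  -- v2 sits in K1 ∪ {c1}
  have hv2K : v2 ∈ K1 ∨ v2 = c1 := by
    obtain ⟨p, hp, hadj⟩ := comp_touch hH hv2H hw2
    have hpF2 : p ∈ F2 := by rw [hF2]; exact hp
    exact hK1closed p v2 (hF2K hpF2) (hv2H) hadj
  have hdisjF2F1 : ∀ x, x ∈ F2 → x ∉ F1 := fun x hx hx1 => hdisj x hx1 (hF2K hx)
  have hv2F1 : v2 ∉ F1 := by
    rcases hv2K with h | h
    · exact fun hmem => hdisj v2 hmem h
    · exact h ▸ hc1F1
  have hv2F2 : v2 ∉ F2 := fun h => (Finset.mem_erase.1 (hF2sub h)).1 rfl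
  -- ports
  obtain ⟨y', hy'c, hay'⟩ := hport c1 hc1H w1 hw1
  have hy'F1 : y' ∈ F1 := by rw [hF1]; exact hy'c
  obtain ⟨z', hz'c, haz'⟩ := hport v2 hv2H w2 hw2
  have hz'F2 : z' ∈ F2 := by rw [hF2]; exact hz'c
  have hy'H : y' ∈ H := Finset.mem_of_mem_erase (hF1sub hy'F1)
  have hz'H : z' ∈ H := Finset.mem_of_mem_erase (hF2sub hz'F2)
  have hz'K1 : z' ∈ K1 := hF2K hz'F2
  have hy'ne : y' ≠ z' := fun h => hdisj y' hy'F1 (h ▸ hz'K1)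
  have hz'c1 : z' ≠ c1 := fun h => hc1K1 (h ▸ hz'K1)
  have hy'c1 : y' ≠ c1 := fun h => hc1F1 (h ▸ hy'F1)
  have hz'v2 : z' ≠ v2 := fun h => (Finset.mem_erase.1 (hF2sub hz'F2)).1 h
  have hy'v2 : y' ≠ v2 := fun h => hv2F1 (h ▸ hy'F1)
  have hnadj : ¬ G.Adj y' z' := by
    intro hadj
    rcases hF1closed y' z' hy'F1 hz'H hadj with h | h
    · exact hdisjF2F1 z' hz'F2 h
    · exact hz'c1 h
  -- y' is not a cut vertex of H
  have hNCy : ConnIn G (H.erase y') := by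
    by_contra hnc
    have hc1y' : c1 ∈ H.erase y' := Finset.mem_erase.2 ⟨fun h => hy'c1 h.symm, hc1H⟩
    obtain ⟨w', hw', hnr⟩ := missing_comp hnc hc1y'
    set F' : Finset V := compIn G (H.erase y') w' with hF'
    have hc1F' : c1 ∉ F' := fun h => hnr (mem_compIn.1 h).symm
    have hF'sub : F' ⊆ H.erase y' := compIn_subset
    obtain ⟨p', hp'F', hadjp'⟩ := comp_touch hH hy'H hw'
    have hp'F1 : p' ∈ F1 := by
      rcases hF1closed y' p' hy'F1 (Finset.mem_of_mem_erase (hF'sub hp'F')) hadjp'.symm with h | h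
      · exact h
      · exact absurd (h ▸ hp'F') hc1F'
    have hF'F1 : F' ⊆ F1 := by
      intro u hu
      have hre : ReachIn G F' p' u := comp_reach_within hp'F' hu
      have hre2 : ReachIn G (H.erase c1) p' u := hre.mono (by
        intro x hx
        exact Finset.mem_erase.2 ⟨fun h => hc1F' (h ▸ hx), Finset.mem_of_mem_erase (hF'sub hx)⟩)
      have : u ∈ compIn G (H.erase c1) p' := mem_compIn.2 hre2
      rwa [← compIn_congr (mem_compIn.1 (hF1 ▸ hp'F1)), ← hF1] at this
    have hy'F' : y' ∉ F' := fun h => (Finset.mem_erase.1 (hF'sub h)).1 rfl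
    have hlt : F'.card < F1.card :=
      Finset.card_lt_card (Finset.ssubset_iff_of_subset hF'F1 |>.2 ⟨y', hy'F1, hy'F'⟩)
    have := hmin y' F' hy'H ⟨w', hw', rfl⟩ ⟨c1, hc1y', hc1F'⟩
    omega
  -- z' is not a cut vertex of H
  have hNCz : ConnIn G (H.erase z') := by
    by_contra hnc
    have hv2z' : v2 ∈ H.erase z' := Finset.mem_erase.2 ⟨fun h => hz'v2 h.symm, hv2H⟩
    obtain ⟨w', hw', hnr⟩ := missing_comp hnc hv2z'
    set F' : Finset V := compIn G (H.erase z') w' with hF'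
    have hv2F' : v2 ∉ F' := fun h => hnr (mem_compIn.1 h).symm
    have hF'sub : F' ⊆ H.erase z' := compIn_subset
    obtain ⟨p', hp'F', hadjp'⟩ := comp_touch hH hz'H hw'
    have hp'F2 : p' ∈ F2 := by
      rcases hF2closed z' p' hz'F2 (Finset.mem_of_mem_erase (hF'sub hp'F')) hadjp'.symm with h | h
      · exact h
      · exact absurd (h ▸ hp'F') hv2F'
    have hF'F2 : F' ⊆ F2 := by
      intro u hu
      have hre : ReachIn G F' p' u := comp_reach_within hp'F' hu
      have hre2 : ReachIn G (H.erase v2) p' u := hre.mono (by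
        intro x hx
        exact Finset.mem_erase.2 ⟨fun h => hv2F' (h ▸ hx), Finset.mem_of_mem_erase (hF'sub hx)⟩)
      have : u ∈ compIn G (H.erase v2) p' := mem_compIn.2 hre2
      rwa [← compIn_congr (mem_compIn.1 (hF2 ▸ hp'F2)), ← hF2] at this
    have hz'F' : z' ∉ F' := fun h => (Finset.mem_erase.1 (hF'sub h)).1 rfl
    have hlt : F'.card < F2.card :=
      Finset.card_lt_card (Finset.ssubset_iff_of_subset hF'F2 |>.2 ⟨z', hz'F2, hz'F'⟩)
    have := hmin2 z' F' hz'H ⟨w', hw', rfl⟩ ⟨v2, hv2z', hv2F'⟩ (hF'F2.trans hF2K)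
    omega
  -- final connectivity
  refine ⟨y', z', hy'H, hz'H, hay', haz', hnadj, hy'ne, ?_⟩
  have hT'mem : ∀ x, x ∈ (H.erase y').erase z' ↔ (x ∈ H ∧ x ≠ y' ∧ x ≠ z') := by
    intro x
    simp only [Finset.mem_erase]
    tauto
  have hc1T' : c1 ∈ (H.erase y').erase z' :=
    (hT'mem c1).2 ⟨hc1H, fun h => hy'c1 h.symm, fun h => hz'c1 h.symm⟩
  have hreach3 : ∀ u, u ∈ (H.erase y').erase z' → u ∉ F1 →
      ReachIn G ((H.erase y').erase z') u c1 := by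
    intro u hu huF1
    obtain ⟨huH, huy', huz'⟩ := (hT'mem u).1 hu
    have huT : u ∈ H.erase z' := Finset.mem_erase.2 ⟨huz', huH⟩
    have hc1T : c1 ∈ H.erase z' := Finset.mem_erase.2 ⟨fun h => hz'c1 h.symm, hc1H⟩
    have hre : ReachIn G (H.erase z') u c1 := hNCz u huT c1 hc1T
    have hF : ∀ p q, p ∈ H.erase z' → q ∈ H.erase z' → G.Adj p q → q ∈ F1 →
        p ∈ F1 ∨ p = c1 := by
      intro p q hp hq hadj hqF1
      exact hF1closed q p hqF1 (Finset.mem_of_mem_erase hp) hadj.symm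
    have hre2 := reach_avoid' hF hre huF1 hc1F1
    refine hre2.mono ?_
    intro x hx
    obtain ⟨hx1, hx2⟩ := Finset.mem_sdiff.1 hx
    obtain ⟨hxz, hxH⟩ := Finset.mem_erase.1 hx1
    exact (hT'mem x).2 ⟨hxH, fun h => hx2 (h ▸ hy'F1), hxz⟩
  have hreach1 : ∀ u, u ∈ (H.erase y').erase z' → u ∈ F1 →
      ReachIn G ((H.erase y').erase z') u c1 := by
    intro u hu huF1
    obtain ⟨huH, huy', huz'⟩ := (hT'mem u).1 hu
    have huT : u ∈ H.erase y' := Finset.mem_erase.2 ⟨huy', huH⟩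
    have hc1T : c1 ∈ H.erase y' := Finset.mem_erase.2 ⟨fun h => hy'c1 h.symm, hc1H⟩
    have hre : ReachIn G (H.erase y') u c1 := hNCy u huT c1 hc1T
    have hF : ∀ p q, p ∈ H.erase y' → q ∈ H.erase y' → G.Adj p q →
        q ∈ (H.erase y') \ (F1 ∪ {c1}) → p ∈ (H.erase y') \ (F1 ∪ {c1}) ∨ p = c1 := by
      intro p q hp hq hadj hqF
      obtain ⟨_, hq2⟩ := Finset.mem_sdiff.1 hqF
      by_cases hpc : p = c1
      · exact Or.inr hpc
      · by_cases hpF1 : p ∈ F1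
        · rcases hF1closed p q hpF1 (Finset.mem_of_mem_erase hq) hadj with h | h
          · exact absurd (Finset.mem_union.2 (Or.inl h)) hq2
          · exact absurd (Finset.mem_union.2 (Or.inr (Finset.mem_singleton.2 h))) hq2
        · refine Or.inl (Finset.mem_sdiff.2 ⟨hp, ?_⟩)
          intro hmem
          rcases Finset.mem_union.1 hmem with h | h
          · exact hpF1 h
          · exact hpc (Finset.mem_singleton.1 h)
    have hre2 := reach_avoid' hF hre (by
        intro hmem
        exact (Finset.mem_sdiff.1 hmem).2 (Finset.mem_union.2 (Or.inl huF1)))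
      (by
        intro hmem
        exact (Finset.mem_sdiff.1 hmem).2 (Finset.mem_union.2 (Or.inr (Finset.mem_singleton.2 rfl))))
    refine hre2.mono ?_
    intro x hx
    obtain ⟨hx1, hx2⟩ := Finset.mem_sdiff.1 hx
    obtain ⟨hxy, hxH⟩ := Finset.mem_erase.1 hx1
    have hx3 : x ∈ F1 ∪ {c1} := by
      by_contra hmem
      exact hx2 (Finset.mem_sdiff.2 ⟨hx1, hmem⟩)
    have hxz : x ≠ z' := by
      intro h
      rw [h] at hx3
      rcases Finset.mem_union.1 hx3 with hm | hm
      · exact hdisjF2F1 z' hz'F2 hm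
      · exact hz'c1 (Finset.mem_singleton.1 hm)
    exact (hT'mem x).2 ⟨hxH, hxy, hxz⟩
  have hreach2 : ∀ u, u ∈ (H.erase y').erase z' → u ∈ F2 →
      ReachIn G ((H.erase y').erase z') u c1 := by
    intro u hu huF2
    obtain ⟨huH, huy', huz'⟩ := (hT'mem u).1 hu
    have huT : u ∈ H.erase z' := Finset.mem_erase.2 ⟨huz', huH⟩
    have hv2T : v2 ∈ H.erase z' := Finset.mem_erase.2 ⟨fun h => hz'v2 h.symm, hv2H⟩
    have hre : ReachIn G (H.erase z') u v2 := hNCz u huT v2 hv2T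
    have hF : ∀ p q, p ∈ H.erase z' → q ∈ H.erase z' → G.Adj p q →
        q ∈ (H.erase z') \ (F2 ∪ {v2}) → p ∈ (H.erase z') \ (F2 ∪ {v2}) ∨ p = v2 := by
      intro p q hp hq hadj hqF
      obtain ⟨_, hq2⟩ := Finset.mem_sdiff.1 hqF
      by_cases hpc : p = v2
      · exact Or.inr hpc
      · by_cases hpF2 : p ∈ F2
        · rcases hF2closed p q hpF2 (Finset.mem_of_mem_erase hq) hadj with h | h
          · exact absurd (Finset.mem_union.2 (Or.inl h)) hq2
          · exact absurd (Finset.mem_union.2 (Or.inr (Finset.mem_singleton.2 h))) hq2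
        · refine Or.inl (Finset.mem_sdiff.2 ⟨hp, ?_⟩)
          intro hmem
          rcases Finset.mem_union.1 hmem with h | h
          · exact hpF2 h
          · exact hpc (Finset.mem_singleton.1 h)
    have hre2 := reach_avoid' hF hre (by
        intro hmem
        exact (Finset.mem_sdiff.1 hmem).2 (Finset.mem_union.2 (Or.inl huF2)))
      (by
        intro hmem
        exact (Finset.mem_sdiff.1 hmem).2 (Finset.mem_union.2 (Or.inr (Finset.mem_singleton.2 rfl))))
    have hrev2 : ReachIn G ((H.erase y').erase z') u v2 := by
      refine hre2.mono ?_
      intro x hx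
      obtain ⟨hx1, hx2⟩ := Finset.mem_sdiff.1 hx
      obtain ⟨hxz, hxH⟩ := Finset.mem_erase.1 hx1
      have hx3 : x ∈ F2 ∪ {v2} := by
        by_contra hmem
        exact hx2 (Finset.mem_sdiff.2 ⟨hx1, hmem⟩)
      have hxy : x ≠ y' := by
        intro h
        rw [h] at hx3
        rcases Finset.mem_union.1 hx3 with hm | hm
        · exact hdisjF2F1 y' hm hy'F1
        · exact hy'v2 (Finset.mem_singleton.1 hm)
      exact (hT'mem x).2 ⟨hxH, hxy, hxz⟩
    rcases hv2K with hv2K1 | hv2c1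
    · have hv2T' : v2 ∈ (H.erase y').erase z' :=
        (hT'mem v2).2 ⟨hv2H, fun h => hy'v2 h.symm, fun h => hz'v2 h.symm⟩
      exact hrev2.trans (hreach3 v2 hv2T' hv2F1)
    · exact hv2c1 ▸ hrev2
  have hall : ∀ u, u ∈ (H.erase y').erase z' → ReachIn G ((H.erase y').erase z') u c1 := by
    intro u hu
    by_cases h1 : u ∈ F1
    · exact hreach1 u hu h1
    · by_cases h2 : u ∈ F2
      · exact hreach2 u hu h2
      · exact hreach3 u hu h1
  intro u hu v hv
  exact (hall u hu).trans (hall v hv).symm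

/-- The fragment argument: given a cut vertex z0 of H, and a vertex a adjacent
into every component of every vertex-deleted subgraph of H, produce two nonadjacent
neighbors of a whose joint removal keeps H connected. -/
theorem frag_main (H : Finset V) (a : V) (hH : ConnIn G H)
    (hport : ∀ v ∈ H, ∀ w ∈ H.erase v, ∃ p, p ∈ compIn G (H.erase v) w ∧ G.Adj a p)
    (z0 : V) (hz0 : z0 ∈ H) (hcut : ¬ ConnIn G (H.erase z0)) :
    ∃ y' z', y' ∈ H ∧ z' ∈ H ∧ G.Adj a y' ∧ G.Adj a z' ∧ ¬ G.Adj y' z' ∧ y' ≠ z' ∧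
      ConnIn G ((H.erase y').erase z') := by
  classical
  have hPne : ∃ n : ℕ, ∃ vF : V × Finset V, (vF.1 ∈ H ∧
      (∃ w ∈ H.erase vF.1, vF.2 = compIn G (H.erase vF.1) w) ∧
      (∃ b ∈ H.erase vF.1, b ∉ vF.2)) ∧ vF.2.card = n := by
    unfold ConnIn at hcut
    push_neg at hcut
    obtain ⟨s, hs, t, ht, hst⟩ := hcut
    refine ⟨_, ⟨z0, compIn G (H.erase z0) s⟩, ⟨hz0, ⟨s, hs, rfl⟩, t, ht, ?_⟩, rfl⟩
    intro hmem
    exact hst (mem_compIn.1 hmem)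
  obtain ⟨⟨c1, F1⟩, hP1, hF1card⟩ := Nat.sInf_mem hPne
  have hmin : ∀ v F, v ∈ H → (∃ w ∈ H.erase v, F = compIn G (H.erase v) w) →
      (∃ b ∈ H.erase v, b ∉ F) → F1.card ≤ F.card := by
    intro v F h1 h2 h3
    rw [hF1card]
    exact Nat.sInf_le ⟨⟨v, F⟩, ⟨h1, h2, h3⟩, rfl⟩
  obtain ⟨hc1H, ⟨w1, hw1, hF1⟩, b1, hb1, hb1F⟩ := hP1
  by_cases hsub : ∃ n : ℕ, ∃ vF : V × Finset V, ((vF.1 ∈ H ∧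
      (∃ w ∈ H.erase vF.1, vF.2 = compIn G (H.erase vF.1) w) ∧
      (∃ b ∈ H.erase vF.1, b ∉ vF.2)) ∧ vF.2 ⊆ compIn G (H.erase c1) b1) ∧ vF.2.card = n
  · obtain ⟨⟨v2, F2⟩, ⟨⟨hv2H, ⟨w2, hw2, hF2⟩, hb2⟩, hF2K⟩, hF2card⟩ := Nat.sInf_mem hsub
    have hmin2 : ∀ v F, v ∈ H → (∃ w ∈ H.erase v, F = compIn G (H.erase v) w) →
        (∃ b ∈ H.erase v, b ∉ F) → F ⊆ compIn G (H.erase c1) b1 → F2.card ≤ F.card := by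
      intro v F h1 h2 h3 h4
      rw [hF2card]
      exact Nat.sInf_le ⟨⟨v, F⟩, ⟨⟨h1, h2, h3⟩, h4⟩, rfl⟩
    exact frag_core H a hH hport c1 F1 hc1H w1 hw1 hF1 hmin b1 hb1 hb1F
      v2 F2 hv2H w2 hw2 hF2 hF2K hmin2
  · push_neg at hsub
    refine frag_core H a hH hport c1 F1 hc1H w1 hw1 hF1 hmin b1 hb1 hb1F
      c1 (compIn G (H.erase c1) b1) hc1H b1 hb1 rfl (le_refl _) ?_
    intro v F h1 h2 h3 h4
    exact absurd rfl (hsub F.card ⟨v, F⟩ ⟨⟨h1, h2, h3⟩, h4⟩)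

end Frag

section LemW

set_option linter.unusedSectionVars false

variable {G : SimpleGraph V}

/-- West's lemma: in a 2-connected regular graph with an induced P3, there is an induced P3
whose two endpoints can be removed keeping the graph connected. -/
theorem lemW (S : Finset V) (hS : ConnIn G S) (h2c : ∀ v ∈ S, ConnIn G (S.erase v))
    (D : ℕ) (hD : 3 ≤ D) (hreg : ∀ v ∈ S, degS G S v = D)
    (x y z : V) (hx : x ∈ S) (hy : y ∈ S) (hz : z ∈ S)
    (hxy : G.Adj x y) (hxz : G.Adj x z) (hyz : ¬ G.Adj y z) (hyzne : y ≠ z) :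
    ∃ x' y' z', x' ∈ S ∧ y' ∈ S ∧ z' ∈ S ∧ G.Adj x' y' ∧ G.Adj x' z' ∧ ¬ G.Adj y' z' ∧
      y' ≠ z' ∧ ConnIn G ((S.erase y').erase z') := by
  by_cases hok : ConnIn G ((S.erase y).erase z)
  · exact ⟨x, y, z, hx, hy, hz, hxy, hxz, hyz, hyzne, hok⟩
  · have hHconn : ConnIn G (S.erase y) := h2c y hy
    have hzH : z ∈ S.erase y := Finset.mem_erase.2 ⟨fun h => hyzne h.symm, hz⟩
    have hport : ∀ v ∈ S.erase y, ∀ w ∈ (S.erase y).erase v,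
        ∃ p, p ∈ compIn G ((S.erase y).erase v) w ∧ G.Adj y p := by
      intro v hv w hw
      obtain ⟨hvy, hvS⟩ := Finset.mem_erase.1 hv
      obtain ⟨hwv, hwH⟩ := Finset.mem_erase.1 hw
      obtain ⟨hwy, hwS⟩ := Finset.mem_erase.1 hwH
      have hwSv : w ∈ S.erase v := Finset.mem_erase.2 ⟨hwv, hwS⟩
      have hySv : y ∈ S.erase v := Finset.mem_erase.2 ⟨fun h => hvy h.symm, hy⟩
      have hre : ReachIn G (S.erase v) w y := h2c v hvS w hwSv y hySv
      have hwF : w ∈ compIn G ((S.erase y).erase v) w := self_mem_compIn hw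
      have hyF : y ∉ compIn G ((S.erase y).erase v) w := by
        intro h
        have := compIn_subset h
        exact (Finset.mem_erase.1 (Finset.mem_of_mem_erase this)).1 rfl
      obtain ⟨p, hp, q, hqSv, hqF, hadj⟩ := exit_edge hre hwF hyF
      by_cases hqy : q = y
      · exact ⟨p, hp, hqy ▸ hadj.symm⟩
      · exfalso
        obtain ⟨hqv, hqS⟩ := Finset.mem_erase.1 hqSv
        have hqmem : q ∈ (S.erase y).erase v :=
          Finset.mem_erase.2 ⟨hqv, Finset.mem_erase.2 ⟨hqy, hqS⟩⟩
        exact hqF (compIn_closed hp hqmem hadj)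
    obtain ⟨y', z', hy'H, hz'H, hay', haz', hnadj, hne, hconnHyz⟩ :=
      frag_main (S.erase y) y hHconn hport z hzH hok
    obtain ⟨hy'y, hy'S⟩ := Finset.mem_erase.1 hy'H
    obtain ⟨hz'y, hz'S⟩ := Finset.mem_erase.1 hz'H
    -- a third neighbor of y
    have hw3 : ∃ w3 ∈ S, G.Adj y w3 ∧ w3 ≠ y' ∧ w3 ≠ z' := by
      by_contra hcon
      push_neg at hcon
      have hsub : S.filter (G.Adj y) ⊆ {y', z'} := by
        intro w hw
        obtain ⟨hwS, hwadj⟩ := Finset.mem_filter.1 hw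
        by_cases h1 : w = y'
        · exact Finset.mem_insert.2 (Or.inl h1)
        · by_cases h2 : w = z'
          · exact Finset.mem_insert.2 (Or.inr (Finset.mem_singleton.2 h2))
          · exact absurd h2 (not_not.2 (hcon w hwS hwadj h1))
      have hcard := Finset.card_le_card hsub
      have : degS G S y = D := hreg y hy
      unfold degS at this
      have hle : ({y', z'} : Finset V).card ≤ 2 := Finset.card_insert_le _ _ |>.trans (by simp)
      omega
    obtain ⟨w3, hw3S, hyw3, hw3y', hw3z'⟩ := hw3
    have hw3y : w3 ≠ y := fun h => G.loopless.irrefl y (h ▸ hyw3)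
    refine ⟨y, y', z', hy, hy'S, hz'S, hay', haz', hnadj, hne, ?_⟩
    -- connectivity of S minus y', z'
    have hmemT2 : ∀ u, u ∈ (S.erase y').erase z' ↔ (u ∈ S ∧ u ≠ y' ∧ u ≠ z') := by
      intro u; simp only [Finset.mem_erase]; tauto
    have hw3T2 : w3 ∈ (S.erase y').erase z' := (hmemT2 w3).2 ⟨hw3S, hw3y', hw3z'⟩
    have hsubT : ((S.erase y).erase y').erase z' ⊆ (S.erase y').erase z' := by
      intro u hu
      obtain ⟨h3, hu2⟩ := Finset.mem_erase.1 hu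
      obtain ⟨h2, hu3⟩ := Finset.mem_erase.1 hu2
      obtain ⟨h1, h0⟩ := Finset.mem_erase.1 hu3
      exact (hmemT2 u).2 ⟨h0, h2, h3⟩
    have hall : ∀ u ∈ (S.erase y').erase z', ReachIn G ((S.erase y').erase z') u w3 := by
      intro u hu
      obtain ⟨huS, huy', huz'⟩ := (hmemT2 u).1 hu
      by_cases huy : u = y
      · subst huy
        exact ReachIn.adj hyw3 hu hw3T2
      · have huH : u ∈ ((S.erase y).erase y').erase z' := by
          refine Finset.mem_erase.2 ⟨huz', Finset.mem_erase.2 ⟨huy', Finset.mem_erase.2 ⟨huy, huS⟩⟩⟩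
        have hw3H : w3 ∈ ((S.erase y).erase y').erase z' := by
          refine Finset.mem_erase.2 ⟨hw3z', Finset.mem_erase.2 ⟨hw3y', Finset.mem_erase.2 ⟨hw3y, hw3S⟩⟩⟩
        exact (hconnHyz u huH w3 hw3H).mono hsubT
    intro u hu v hv
    exact (hall u hu).trans (hall v hv).symm

/-- The final schedule in the regular 2-connected case. -/
theorem core_reg (S : Finset V) (hconn : ConnIn G S) (D : ℕ) (hD : 3 ≤ D)
    (hreg : ∀ v ∈ S, degS G S v = D) (x' y' z' : V) (hx' : x' ∈ S) (hy' : y' ∈ S)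
    (hz' : z' ∈ S) (hx'y' : G.Adj x' y') (hx'z' : G.Adj x' z') (hny'z' : ¬ G.Adj y' z')
    (hne : y' ≠ z') (hconn2 : ConnIn G ((S.erase y').erase z')) :
    WeakDegenOn G S (fun v => (degS G S v : ℤ) - 1) := by
  have hx'y'ne : x' ≠ y' := G.ne_of_adj hx'y'
  have hx'z'ne : x' ≠ z' := G.ne_of_adj hx'z'
  have hx'1 : x' ∈ S.erase y' := Finset.mem_erase.2 ⟨hx'y'ne, hx'⟩
  have hz'1 : z' ∈ S.erase y' := Finset.mem_erase.2 ⟨fun h => hne h.symm, hz'⟩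
  have hx'2 : x' ∈ (S.erase y').erase z' := Finset.mem_erase.2 ⟨hx'z'ne, hx'1⟩
  refine WeakDegenOn.delete S _ y' hy' ?_ ?_
  · intro v hv
    have hvS := Finset.mem_of_mem_erase hv
    have hd : degS G S v = D := hreg v hvS
    by_cases hadj : G.Adj y' v
    · rw [if_pos hadj]
      have : (degS G S v : ℤ) = D := by exact_mod_cast hd
      omega
    · rw [if_neg hadj]
      have : (degS G S v : ℤ) = D := by exact_mod_cast hd
      omega
  · refine WeakDegenOn.delSave (S.erase y') _ z' x' hz'1 hx'1 hx'z'.symm ?_ ?_ ?_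
    · rw [if_pos (hx'y'.symm), if_neg hny'z']
      have h1 : (degS G S x' : ℤ) = D := by exact_mod_cast hreg x' hx'
      have h2 : (degS G S z' : ℤ) = D := by exact_mod_cast hreg z' hz'
      omega
    · intro v hv
      have hvS := Finset.mem_of_mem_erase (Finset.mem_of_mem_erase hv)
      have hd : (degS G S v : ℤ) = D := by exact_mod_cast hreg v hvS
      by_cases hc : G.Adj z' v ∧ v ≠ x'
      · rw [if_pos hc]
        by_cases hadj : G.Adj y' v
        · rw [if_pos hadj]; omega
        · rw [if_neg hadj]; omega
      · rw [if_neg hc]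
        by_cases hadj : G.Adj y' v
        · rw [if_pos hadj]; omega
        · rw [if_neg hadj]; omega
    · -- finish with Lemma C rooted at x'
      refine lemC ((S.erase y').erase z').card _ _ x' le_rfl hconn2 hx'2 ?_ ?_
      · intro v hv
        obtain ⟨hvz', hv1⟩ := Finset.mem_erase.1 hv
        obtain ⟨hvy', hvS⟩ := Finset.mem_erase.1 hv1
        have hd : (degS G S v : ℤ) = D := by exact_mod_cast hreg v hvS
        -- relate degS of double erase to degS S
        have e1 : G.Adj v y' → (degS G (S.erase y') v : ℤ) + 1 = degS G S v := by
          intro h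
          exact_mod_cast degS_erase_adj (G := G) hy' h
        have e1' : ¬ G.Adj v y' → (degS G (S.erase y') v : ℤ) = degS G S v := by
          intro h
          exact_mod_cast degS_erase_nonadj (G := G) (S := S) (u := y') (v := v) h
        have e2 : G.Adj v z' → (degS G ((S.erase y').erase z') v : ℤ) + 1 = degS G (S.erase y') v := by
          intro h
          exact_mod_cast degS_erase_adj (G := G) hz'1 h
        have e2' : ¬ G.Adj v z' → (degS G ((S.erase y').erase z') v : ℤ) = degS G (S.erase y') v := by
          intro h
          exact_mod_cast degS_erase_nonadj (G := G) (S := S.erase y') (u := z') (v := v) h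
        by_cases h1 : G.Adj y' v
        · have he1 := e1 h1.symm
          by_cases h2 : G.Adj z' v
          · have he2 := e2 h2.symm
            by_cases h3 : v = x'
            · rw [if_pos h1, if_neg (by simp [h3])]
              omega
            · rw [if_pos h1, if_pos ⟨h2, h3⟩]
              omega
          · have he2 := e2' (fun h => h2 h.symm)
            rw [if_pos h1, if_neg (by tauto)]
            omega
        · have he1 := e1' (fun h => h1 h.symm)
          by_cases h2 : G.Adj z' v
          · have he2 := e2 h2.symm
            by_cases h3 : v = x'
            · exfalso
              apply h1
              rw [h3]
              exact hx'y'.symm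
            · rw [if_neg h1, if_pos ⟨h2, h3⟩]
              omega
          · have he2 := e2' (fun h => h2 h.symm)
            rw [if_neg h1, if_neg (by tauto)]
            omega
      · -- root surplus at x'
        have hd : (degS G S x' : ℤ) = D := by exact_mod_cast hreg x' hx'
        have he1 : (degS G (S.erase y') x' : ℤ) + 1 = degS G S x' := by
          exact_mod_cast degS_erase_adj (G := G) hy' hx'y'
        have he2 : (degS G ((S.erase y').erase z') x' : ℤ) + 1 = degS G (S.erase y') x' := by
          exact_mod_cast degS_erase_adj (G := G) hz'1 hx'z'
        rw [if_neg (by simp), if_pos hx'y'.symm]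
        omega

end LemW

section ThmA

set_option linter.unusedSectionVars false

variable {G : SimpleGraph V}

theorem deg_eq_of_reach {S : Finset V}
    (hadjeq : ∀ a ∈ S, ∀ b ∈ S, G.Adj a b → degS G S a = degS G S b)
    {a b : V} (h : ReachIn G S a b) : degS G S a = degS G S b := by
  obtain ⟨ha, hb, p, hp⟩ := h
  revert ha hp
  induction p with
  | nil => intro _ _; rfl
  | @cons u s d hadj q ih =>
    intro ha hp
    have hsS : s ∈ S := hp s (by simp [SimpleGraph.Walk.support_cons, q.start_mem_support])
    have h1 : degS G S u = degS G S s := hadjeq u ha s hsS hadj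
    have h2 := ih hb hsS (fun x hx => hp x (by simp [SimpleGraph.Walk.support_cons]; right; exact hx))
    omega

/-- Main induction: a connected all-deficient graph with a certificate
(a vertex x with three neighbors y,z,t, with y,z nonadjacent, all in
one component of S-x) is weakly degenerate. -/
theorem thmA : ∀ (n : ℕ) (S : Finset V), S.card ≤ n → ConnIn G S →
    ∀ x y z t : V, x ∈ S → y ∈ S → z ∈ S → t ∈ S →
    G.Adj x y → G.Adj x z → G.Adj x t → ¬ G.Adj y z → y ≠ z → y ≠ t → z ≠ t →
    ReachIn G (S.erase x) y z → ReachIn G (S.erase x) y t →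
    WeakDegenOn G S (fun v => (degS G S v : ℤ) - 1) := by
  intro n
  induction n with
  | zero =>
    intro S hcard _ x _ _ _ hx
    rw [Nat.le_zero, Finset.card_eq_zero] at hcard
    subst hcard
    exact absurd hx (by simp)
  | succ n IH =>
    intro S hcard hconn x y z t hx hy hz ht hxy hxz hxt hyz hyzne hytne hztne hryz hryt
    have hxyne : x ≠ y := G.ne_of_adj hxy
    have hxzne : x ≠ z := G.ne_of_adj hxz
    have hxtne : x ≠ t := G.ne_of_adj hxt
    by_cases hcut : ∃ v ∈ S, ¬ ConnIn G (S.erase v)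
    · obtain ⟨v, hvS, hcutv⟩ := hcut
      by_cases hvx : v = x
      · -- the cut vertex is x itself; keep the component of y
        subst hvx
        set W : Finset V := compIn G (S.erase v) y with hWdef
        have hyv : y ∈ S.erase v := Finset.mem_erase.2 ⟨fun h => hxyne h.symm, hy⟩
        have hWy : y ∈ W := self_mem_compIn hyv
        have hWz : z ∈ W := mem_compIn.2 hryz
        have hWt : t ∈ W := mem_compIn.2 hryt
        have hWsub : W ⊆ S.erase v := compIn_subset
        have hvW : v ∉ W := fun h => (Finset.mem_erase.1 (hWsub h)).1 rfl
        obtain ⟨b0, hb0, hb0r⟩ := missing_comp hcutv hyv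
        have hb0W : b0 ∉ W := fun h => hb0r (mem_compIn.1 h)
        set O : Finset V := (S.erase v) \ W with hOdef
        have hb0O : b0 ∈ O := Finset.mem_sdiff.2 ⟨hb0, hb0W⟩
        have hOsub : O ⊆ S := fun u hu => Finset.mem_of_mem_erase (Finset.mem_sdiff.1 hu).1
        have hvO : v ∉ O := fun h => (Finset.mem_erase.1 (Finset.mem_sdiff.1 h).1).1 rfl
        have hWO : ∀ u, u ∈ W → u ∉ O := fun u hu h => (Finset.mem_sdiff.1 h).2 hu
        -- edges into W only from v
        have hF : ∀ p q, p ∈ S → q ∈ S → G.Adj p q → q ∈ W → p ∈ W ∨ p = v := by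
          intro p q hp hq hadj hqW
          by_cases hpv : p = v
          · exact Or.inr hpv
          · exact Or.inl (compIn_closed hqW (Finset.mem_erase.2 ⟨hpv, hp⟩) hadj.symm)
        have hreachO : ∀ u ∈ O, ReachIn G (S \ W) u v := by
          intro u hu
          have huS : u ∈ S := hOsub hu
          have huW : u ∉ W := (Finset.mem_sdiff.1 hu).2
          exact reach_avoid' hF (hconn u huS v hvS) huW hvW
        -- the phase
        have hphase := phase (G := G) O.card S O le_rfl hOsub (fun u => dIn G (S \ W) u v)
          ?_ ?_ ?_ ?_
        rotate_left
        · -- h1: parents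
          intro u hu
          obtain ⟨p', hp', hlen⟩ := dIn_exists (hreachO u hu)
          have huv : u ≠ v := fun h => hvO (h ▸ hu)
          cases p' with
          | nil => exact absurd rfl huv
          | @cons _ s _ hadj q =>
            have hsSW : s ∈ S \ W := hp' s (by
              simp [SimpleGraph.Walk.support_cons, q.start_mem_support])
            refine ⟨s, (Finset.mem_sdiff.1 hsSW).1, hadj, ?_⟩
            intro _
            have h1 : dIn G (S \ W) s v ≤ q.length := dIn_le q (fun x hx => hp' x (by
              simp [SimpleGraph.Walk.support_cons]; right; exact hx))
            rw [SimpleGraph.Walk.length_cons] at hlen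
            show dIn G (S \ W) s v < dIn G (S \ W) u v
            omega
        · -- h2: kept vertices adjacent to O keep a neighbor
          intro p hp hpO hex
          by_cases hpv : p = v
          · subst hpv
            exact ⟨y, hy, hWO y hWy, hxy⟩
          · exfalso
            obtain ⟨a0, ha0, hadj0⟩ := hex
            have hpW : p ∈ W := by
              by_contra hpW
              exact hpO (Finset.mem_sdiff.2 ⟨Finset.mem_erase.2 ⟨hpv, hp⟩, hpW⟩)
            have := compIn_closed hpW (Finset.mem_sdiff.1 ha0).1 hadj0
            exact (Finset.mem_sdiff.1 ha0).2 this
        · -- h3: no isolated vertices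
          intro u huS
          by_cases huv : u = v
          · exact ⟨y, hy, huv ▸ hxy⟩
          · obtain ⟨w, hw, hadj⟩ := reach_nbr (hconn u huS v hvS) huv
            exact ⟨w, hw, hadj⟩
        · -- the remaining graph: apply IH
          have hSOsub : ∀ u, u ∈ S \ O → u = v ∨ u ∈ W := by
            intro u hu
            obtain ⟨huS, huO⟩ := Finset.mem_sdiff.1 hu
            by_cases huv : u = v
            · exact Or.inl huv
            · refine Or.inr ?_
              by_contra huW
              exact huO (Finset.mem_sdiff.2 ⟨Finset.mem_erase.2 ⟨huv, huS⟩, huW⟩)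
          have hWsub' : W ⊆ S \ O := fun u hu =>
            Finset.mem_sdiff.2 ⟨Finset.mem_of_mem_erase (hWsub hu), hWO u hu⟩
          have hvSO : v ∈ S \ O := Finset.mem_sdiff.2 ⟨hvS, hvO⟩
          have hreachW : ∀ u ∈ W, ReachIn G (S \ O) u v := by
            intro u hu
            have h1 : ReachIn G W y u := reachIn_compIn (mem_compIn.1 hu)
            have h2 : ReachIn G (S \ O) y u := h1.mono hWsub'
            exact (h2.symm).trans (ReachIn.adj hxy.symm (hWsub' hWy) hvSO)
          have hconn' : ConnIn G (S \ O) := by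
            intro a ha b hb
            have hra : ReachIn G (S \ O) a v := by
              rcases hSOsub a ha with h | h
              · exact h ▸ ReachIn.refl ha
              · exact hreachW a h
            have hrb : ReachIn G (S \ O) b v := by
              rcases hSOsub b hb with h | h
              · exact h ▸ ReachIn.refl hb
              · exact hreachW b h
            exact hra.trans hrb.symm
          have hWerase : W ⊆ (S \ O).erase v := by
            intro u hu
            exact Finset.mem_erase.2 ⟨fun h => hvW (h ▸ hu), hWsub' hu⟩
          have hryz' : ReachIn G ((S \ O).erase v) y z :=
            (reachIn_compIn (mem_compIn.1 hWz)).mono hWerase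
          have hryt' : ReachIn G ((S \ O).erase v) y t :=
            (reachIn_compIn (mem_compIn.1 hWt)).mono hWerase
          have hcard' : (S \ O).card ≤ n := by
            have h1 : S \ O ⊂ S := Finset.ssubset_iff_of_subset (Finset.sdiff_subset) |>.2
              ⟨b0, hOsub hb0O, fun h => (Finset.mem_sdiff.1 h).2 hb0O⟩
            have := Finset.card_lt_card h1
            omega
          exact IH (S \ O) hcard' hconn' v y z t hvSO (hWsub' hWy) (hWsub' hWz) (hWsub' hWt)
            hxy hxz hxt hyz hyzne hytne hztne hryz' hryt'
        exact hphase
      · -- cut vertex v ≠ x : keep the component of x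
        have hxv : x ∈ S.erase v := Finset.mem_erase.2 ⟨fun h => hvx h.symm, hx⟩
        set D : Finset V := compIn G (S.erase v) x with hDdef
        have hDx : x ∈ D := self_mem_compIn hxv
        have hDsub : D ⊆ S.erase v := compIn_subset
        have hvD : v ∉ D := fun h => (Finset.mem_erase.1 (hDsub h)).1 rfl
        obtain ⟨b0, hb0, hb0r⟩ := missing_comp hcutv hxv
        have hb0D : b0 ∉ D := fun h => hb0r (mem_compIn.1 h)
        set O : Finset V := (S.erase v) \ D with hOdef
        have hb0O : b0 ∈ O := Finset.mem_sdiff.2 ⟨hb0, hb0D⟩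
        have hOsub : O ⊆ S := fun u hu => Finset.mem_of_mem_erase (Finset.mem_sdiff.1 hu).1
        have hvO : v ∉ O := fun h => (Finset.mem_erase.1 (Finset.mem_sdiff.1 h).1).1 rfl
        have hDO : ∀ u, u ∈ D → u ∉ O := fun u hu h => (Finset.mem_sdiff.1 h).2 hu
        have hxO : x ∉ O := hDO x hDx
        -- a neighbor of v inside D
        obtain ⟨p0, hp0D, hp0adj⟩ := comp_touch hconn hvS hxv
        have hF : ∀ p q, p ∈ S → q ∈ S → G.Adj p q → q ∈ D → p ∈ D ∨ p = v := by
          intro p q hp hq hadj hqD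
          by_cases hpv : p = v
          · exact Or.inr hpv
          · exact Or.inl (compIn_closed hqD (Finset.mem_erase.2 ⟨hpv, hp⟩) hadj.symm)
        have hreachO : ∀ u ∈ O, ReachIn G (S \ D) u v := by
          intro u hu
          have huS : u ∈ S := hOsub hu
          have huD : u ∉ D := (Finset.mem_sdiff.1 hu).2
          exact reach_avoid' hF (hconn u huS v hvS) huD hvD
        have hphase := phase (G := G) O.card S O le_rfl hOsub (fun u => dIn G (S \ D) u v)
          ?_ ?_ ?_ ?_
        rotate_left
        · intro u hu
          obtain ⟨p', hp', hlen⟩ := dIn_exists (hreachO u hu)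
          have huv : u ≠ v := fun h => hvO (h ▸ hu)
          cases p' with
          | nil => exact absurd rfl huv
          | @cons _ s _ hadj q =>
            have hsSW : s ∈ S \ D := hp' s (by
              simp [SimpleGraph.Walk.support_cons, q.start_mem_support])
            refine ⟨s, (Finset.mem_sdiff.1 hsSW).1, hadj, ?_⟩
            intro _
            have h1 : dIn G (S \ D) s v ≤ q.length := dIn_le q (fun x' hx' => hp' x' (by
              simp [SimpleGraph.Walk.support_cons]; right; exact hx'))
            rw [SimpleGraph.Walk.length_cons] at hlen
            show dIn G (S \ D) s v < dIn G (S \ D) u v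
            omega
        · intro p hp hpO hex
          by_cases hpv : p = v
          · subst hpv
            exact ⟨p0, Finset.mem_of_mem_erase (hDsub hp0D), hDO p0 hp0D, hp0adj.symm⟩
          · exfalso
            obtain ⟨a0, ha0, hadj0⟩ := hex
            have hpD : p ∈ D := by
              by_contra hpD
              exact hpO (Finset.mem_sdiff.2 ⟨Finset.mem_erase.2 ⟨hpv, hp⟩, hpD⟩)
            have := compIn_closed hpD (Finset.mem_sdiff.1 ha0).1 hadj0
            exact (Finset.mem_sdiff.1 ha0).2 this
        · intro u huS
          by_cases huv : u = v
          · exact ⟨p0, Finset.mem_of_mem_erase (hDsub hp0D), huv ▸ hp0adj.symm⟩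
          · obtain ⟨w, hw, hadj⟩ := reach_nbr (hconn u huS v hvS) huv
            exact ⟨w, hw, hadj⟩
        · -- apply IH on S \ O
          have hDsub' : D ⊆ S \ O := fun u hu =>
            Finset.mem_sdiff.2 ⟨Finset.mem_of_mem_erase (hDsub hu), hDO u hu⟩
          have hvSO : v ∈ S \ O := Finset.mem_sdiff.2 ⟨hvS, hvO⟩
          have hreachD : ∀ u ∈ D, ReachIn G (S \ O) u x := by
            intro u hu
            exact ((reachIn_compIn (mem_compIn.1 hu)).mono hDsub').symm
          have hconn' : ConnIn G (S \ O) := by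
            intro a ha b hb
            have key : ∀ c ∈ S \ O, ReachIn G (S \ O) c x := by
              intro c hc
              obtain ⟨hcS, hcO⟩ := Finset.mem_sdiff.1 hc
              by_cases hcv : c = v
              · subst hcv
                exact (ReachIn.adj hp0adj.symm hc (hDsub' hp0D)).trans (hreachD p0 hp0D)
              · have hcD : c ∈ D := by
                  by_contra hcD
                  exact hcO (Finset.mem_sdiff.2 ⟨Finset.mem_erase.2 ⟨hcv, hcS⟩, hcD⟩)
                exact hreachD c hcD
            exact (key a ha).trans (key b hb).symm
          -- memberships of the certificate in S \ O
          have hDnbr : ∀ w', G.Adj x w' → w' ∈ S → w' ∈ S \ O := by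
            intro w' hadj hw'S
            by_cases hw'v : w' = v
            · exact Finset.mem_sdiff.2 ⟨hw'S, hw'v ▸ hvO⟩
            · have : w' ∈ D := compIn_closed hDx (Finset.mem_erase.2 ⟨hw'v, hw'S⟩) hadj
              exact hDsub' this
          have hySO := hDnbr y hxy hy
          have hzSO := hDnbr z hxz hz
          have htSO := hDnbr t hxt ht
          have hxSO : x ∈ S \ O := hDsub' hDx
          -- reachability in (S \ O).erase x via rerouting around O
          have hF2 : ∀ p q, p ∈ S.erase x → q ∈ S.erase x → G.Adj p q → q ∈ O →
              p ∈ O ∨ p = v := by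
            intro p q hp hq hadj hqO
            by_cases hpv : p = v
            · exact Or.inr hpv
            · obtain ⟨hpx, hpS⟩ := Finset.mem_erase.1 hp
              have hpSv : p ∈ S.erase v := Finset.mem_erase.2 ⟨hpv, hpS⟩
              by_cases hpD : p ∈ D
              · exfalso
                have := compIn_closed hpD (Finset.mem_sdiff.1 hqO).1 hadj
                exact (Finset.mem_sdiff.1 hqO).2 this
              · exact Or.inl (Finset.mem_sdiff.2 ⟨hpSv, hpD⟩)
          have hnotO : ∀ w', w' ∈ S \ O → w' ∉ O := fun w' hw' => (Finset.mem_sdiff.1 hw').2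
          have hsub2 : (S.erase x) \ O ⊆ (S \ O).erase x := by
            intro u hu
            obtain ⟨hu1, hu2⟩ := Finset.mem_sdiff.1 hu
            obtain ⟨hux, huS⟩ := Finset.mem_erase.1 hu1
            exact Finset.mem_erase.2 ⟨hux, Finset.mem_sdiff.2 ⟨huS, hu2⟩⟩
          have hryz' : ReachIn G ((S \ O).erase x) y z :=
            (reach_avoid' hF2 hryz (hnotO y hySO) (hnotO z hzSO)).mono hsub2
          have hryt' : ReachIn G ((S \ O).erase x) y t :=
            (reach_avoid' hF2 hryt (hnotO y hySO) (hnotO t htSO)).mono hsub2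
          have hcard' : (S \ O).card ≤ n := by
            have h1 : S \ O ⊂ S := Finset.ssubset_iff_of_subset (Finset.sdiff_subset) |>.2
              ⟨b0, hOsub hb0O, fun h => (Finset.mem_sdiff.1 h).2 hb0O⟩
            have := Finset.card_lt_card h1
            omega
          exact IH (S \ O) hcard' hconn' x y z t hxSO hySO hzSO htSO
            hxy hxz hxt hyz hyzne hytne hztne hryz' hryt'
        exact hphase
    · -- no cut vertex : 2-connected case
      push_neg at hcut
      by_cases hpair : ∃ a ∈ S, ∃ b ∈ S, G.Adj a b ∧ degS G S b < degS G S a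
      · obtain ⟨a, ha, b, hb, hadj, hdeg⟩ := hpair
        exact nc S hconn a b ha hb hadj hdeg (hcut a ha)
      · push_neg at hpair
        have hadjeq : ∀ a ∈ S, ∀ b ∈ S, G.Adj a b → degS G S a = degS G S b := by
          intro a ha b hb hadj
          exact le_antisymm (hpair a ha b hb hadj) (hpair b hb a ha hadj.symm)
        have hregall : ∀ v ∈ S, degS G S v = degS G S x := by
          intro v hv
          exact deg_eq_of_reach hadjeq (hconn v hv x hx)
        have hD3 : 3 ≤ degS G S x := by
          have hsub3 : ({y, z, t} : Finset V) ⊆ S.filter (G.Adj x) := by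
            intro w hw
            simp only [Finset.mem_insert, Finset.mem_singleton] at hw
            rcases hw with rfl | rfl | rfl
            · exact Finset.mem_filter.2 ⟨hy, hxy⟩
            · exact Finset.mem_filter.2 ⟨hz, hxz⟩
            · exact Finset.mem_filter.2 ⟨ht, hxt⟩
          have hc3 : ({y, z, t} : Finset V).card = 3 := by
            rw [Finset.card_insert_of_notMem (by simp [hyzne, hytne]),
              Finset.card_insert_of_notMem (by simp [hztne]), Finset.card_singleton]
          calc 3 = ({y, z, t} : Finset V).card := hc3.symm
          _ ≤ _ := Finset.card_le_card hsub3
        obtain ⟨x', y', z', hx'S, hy'S, hz'S, hx'y', hx'z', hny'z', hne', hconn2⟩ :=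
          lemW S hconn hcut (degS G S x) hD3 hregall x y z hx hy hz hxy hxz hyz hyzne
        exact core_reg S hconn (degS G S x) hD3 hregall x' y' z' hx'S hy'S hz'S
          hx'y' hx'z' hny'z' hne' hconn2

end ThmA

section Top

set_option linter.unusedSectionVars false

variable {G : SimpleGraph V}

theorem third_nbr {S : Finset V} {x : V} (u w : V) (h3 : 3 ≤ degS G S x) :
    ∃ t ∈ S, G.Adj x t ∧ t ≠ u ∧ t ≠ w := by
  by_contra hcon
  push_neg at hcon
  have hsub : S.filter (G.Adj x) ⊆ {u, w} := by
    intro r hr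
    obtain ⟨hrS, hradj⟩ := Finset.mem_filter.1 hr
    by_cases h1 : r = u
    · exact Finset.mem_insert.2 (Or.inl h1)
    · by_cases h2 : r = w
      · exact Finset.mem_insert.2 (Or.inr (Finset.mem_singleton.2 h2))
      · exact absurd h2 (not_not.2 (hcon r hrS hradj h1))
  have hcard := Finset.card_le_card hsub
  have hle : ({u, w} : Finset V).card ≤ 2 := Finset.card_insert_le _ _ |>.trans (by simp)
  unfold degS at h3
  omega

/-- all vertices simplicial and connected implies complete -/
theorem simplicial_complete [Fintype V] (hconn : ConnIn G (Finset.univ : Finset V))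
    (hsimp : ∀ v p q : V, G.Adj v p → G.Adj v q → p ≠ q → G.Adj p q) :
    ∀ a b : V, a ≠ b → G.Adj a b := by
  intro a b hne
  obtain ⟨_, _, p, _⟩ := hconn a (Finset.mem_univ a) b (Finset.mem_univ b)
  revert hne
  induction p with
  | nil => intro h; exact absurd rfl h
  | @cons u s e hadj q ih =>
    intro hne
    by_cases hse : s = e
    · exact hse ▸ hadj
    · have h2 : G.Adj s e := ih (Finset.mem_univ _) (Finset.mem_univ _) (fun x hx => Finset.mem_univ x) hse
      by_cases hue : u = s
      · rw [hue]; exact h2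
      · exact hsimp s u e hadj.symm h2 hne

end Top

section Cert

set_option linter.unusedSectionVars false

variable {G : SimpleGraph V}

theorem cert_exists [Fintype V] (hconn : ConnIn G (Finset.univ : Finset V)) (d : ℕ)
    (hd : 3 ≤ d) (hreg : ∀ v : V, degS G Finset.univ v = d)
    (hncomp : ¬ ∀ a b : V, a ≠ b → G.Adj a b) :
    ∃ x y z t : V, G.Adj x y ∧ G.Adj x z ∧ G.Adj x t ∧ ¬ G.Adj y z ∧ y ≠ z ∧ y ≠ t ∧ z ≠ t ∧
      ReachIn G ((Finset.univ : Finset V).erase x) y z ∧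
      ReachIn G ((Finset.univ : Finset V).erase x) y t := by
  by_contra hCERT
  push_neg at hCERT
  -- (a) every non-simplicial vertex is a cut vertex
  have hcut_of_nonsimp : ∀ x₀ u w : V, G.Adj x₀ u → G.Adj x₀ w → ¬ G.Adj u w → u ≠ w →
      ¬ ConnIn G ((Finset.univ : Finset V).erase x₀) := by
    intro x₀ u w hu hw hnadj hne hconn0
    obtain ⟨t, _, ht, htu, htw⟩ := third_nbr (G := G) (S := (Finset.univ : Finset V))
      (x := x₀) u w (by rw [hreg x₀]; exact hd)
    have hmemu : u ∈ (Finset.univ : Finset V).erase x₀ :=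
      Finset.mem_erase.2 ⟨fun h => G.ne_of_adj hu h.symm, Finset.mem_univ u⟩
    have hmemw : w ∈ (Finset.univ : Finset V).erase x₀ :=
      Finset.mem_erase.2 ⟨fun h => G.ne_of_adj hw h.symm, Finset.mem_univ w⟩
    have hmemt : t ∈ (Finset.univ : Finset V).erase x₀ :=
      Finset.mem_erase.2 ⟨fun h => G.ne_of_adj ht h.symm, Finset.mem_univ t⟩
    exact hCERT x₀ u w t hu hw ht hnadj hne (fun h => htu h.symm) (fun h => htw h.symm)
      (hconn0 u hmemu w hmemw) (hconn0 u hmemu t hmemt)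
  -- a non-simplicial vertex exists
  have hex : ∃ v p q : V, G.Adj v p ∧ G.Adj v q ∧ p ≠ q ∧ ¬ G.Adj p q := by
    by_contra h
    push_neg at h
    exact hncomp (simplicial_complete hconn (fun v p q h1 h2 h3 => h v p q h1 h2 h3))
  obtain ⟨x₀, u₀, w₀, hxu₀, hxw₀, hne₀, hnadj₀⟩ := hex
  have hcut₀ := hcut_of_nonsimp x₀ u₀ w₀ hxu₀ hxw₀ hnadj₀ hne₀
  have hmemu₀ : u₀ ∈ (Finset.univ : Finset V).erase x₀ :=
    Finset.mem_erase.2 ⟨fun h => G.ne_of_adj hxu₀ h.symm, Finset.mem_univ u₀⟩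
  -- (c) minimal component pair
  have hPne : ∃ n : ℕ, ∃ vw : V × V, (vw.2 ∈ (Finset.univ : Finset V).erase vw.1 ∧
      ∃ b ∈ (Finset.univ : Finset V).erase vw.1,
        b ∉ compIn G ((Finset.univ : Finset V).erase vw.1) vw.2) ∧
      (compIn G ((Finset.univ : Finset V).erase vw.1) vw.2).card = n := by
    obtain ⟨w', hw', hnr⟩ := missing_comp hcut₀ hmemu₀
    refine ⟨_, ⟨x₀, w'⟩, ⟨hw', u₀, hmemu₀, ?_⟩, rfl⟩
    intro hmem
    exact hnr (mem_compIn.1 hmem).symm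
  obtain ⟨⟨v, w⟩, ⟨hwv, b, hbv, hbC⟩, hCcard⟩ := Nat.sInf_mem hPne
  set C : Finset V := compIn G ((Finset.univ : Finset V).erase v) w with hCdef
  have hmin : ∀ (v' w' : V), w' ∈ (Finset.univ : Finset V).erase v' →
      (∃ b' ∈ (Finset.univ : Finset V).erase v',
        b' ∉ compIn G ((Finset.univ : Finset V).erase v') w') →
      C.card ≤ (compIn G ((Finset.univ : Finset V).erase v') w').card := by
    intro v' w' h1 h2
    rw [hCcard]
    exact Nat.sInf_le ⟨⟨v', w'⟩, ⟨h1, h2⟩, rfl⟩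
  have hCsub : C ⊆ (Finset.univ : Finset V).erase v := compIn_subset
  -- (d) every vertex of C is non-cut
  have hnocut : ∀ u ∈ C, ConnIn G ((Finset.univ : Finset V).erase u) := by
    intro u huC
    by_contra hcut_u
    have hvu : v ∈ (Finset.univ : Finset V).erase u :=
      Finset.mem_erase.2 ⟨fun h => (Finset.mem_erase.1 (hCsub huC)).1 h.symm, Finset.mem_univ v⟩
    obtain ⟨w', hw', hnr⟩ := missing_comp hcut_u hvu
    set C' : Finset V := compIn G ((Finset.univ : Finset V).erase u) w' with hC'def
    have hvC' : v ∉ C' := fun h => hnr (mem_compIn.1 h).symm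
    obtain ⟨p, hpC', hpadj⟩ := comp_touch hconn (Finset.mem_univ u) hw'
    have hpv : p ≠ v := fun h => hvC' (h ▸ hpC')
    have hpC : p ∈ C := compIn_closed huC
      (Finset.mem_erase.2 ⟨hpv, Finset.mem_univ p⟩) hpadj.symm
    have hC'C : C' ⊆ C := by
      intro q hq
      have hre : ReachIn G C' p q := comp_reach_within hpC' hq
      have hre2 : ReachIn G ((Finset.univ : Finset V).erase v) p q := hre.mono (by
        intro r hr
        exact Finset.mem_erase.2 ⟨fun h => hvC' (h ▸ hr), Finset.mem_univ r⟩)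
      have : q ∈ compIn G ((Finset.univ : Finset V).erase v) p := mem_compIn.2 hre2
      rwa [← compIn_congr (mem_compIn.1 hpC)] at this
    have huC' : u ∉ C' := fun h => (Finset.mem_erase.1 (compIn_subset h)).1 rfl
    have hlt : C'.card < C.card :=
      Finset.card_lt_card (Finset.ssubset_iff_of_subset hC'C |>.2 ⟨u, huC, huC'⟩)
    have hge := hmin u w' hw' ⟨v, hvu, hvC'⟩
    rw [← hC'def] at hge
    omega
  -- (e) every vertex of C is simplicial
  have hsimpC : ∀ u ∈ C, ∀ p q : V, G.Adj u p → G.Adj u q → p ≠ q → G.Adj p q := by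
    intro u huC p q h1 h2 h3
    by_contra hnadj
    exact hcut_of_nonsimp u p q h1 h2 hnadj h3 (hnocut u huC)
  -- port from C to v
  obtain ⟨y₁, hy₁C, hy₁adj⟩ := comp_touch hconn (Finset.mem_univ v) hwv
  -- port from b's component to v
  obtain ⟨q, hqK, hqadj⟩ := comp_touch hconn (Finset.mem_univ v) hbv
  have hqC : q ∉ C := by
    intro hmem
    have h1 : ReachIn G ((Finset.univ : Finset V).erase v) w q := mem_compIn.1 hmem
    have h2 : ReachIn G ((Finset.univ : Finset V).erase v) b q := mem_compIn.1 hqK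
    exact hbC (mem_compIn.2 (h1.trans h2.symm))
  -- counting: N(v) = {y₁} ∪ (N(y₁) \ {v})
  have hy₁simp := hsimpC y₁ hy₁C
  have hvy₁ : G.Adj y₁ v := hy₁adj
  set T : Finset V := insert y₁ ((Finset.univ.filter (G.Adj y₁)).erase v) with hTdef
  have hTsub : T ⊆ Finset.univ.filter (G.Adj v) := by
    intro r hr
    rcases Finset.mem_insert.1 hr with rfl | hr
    · exact Finset.mem_filter.2 ⟨Finset.mem_univ _, hvy₁.symm⟩
    · obtain ⟨hrv, hrf⟩ := Finset.mem_erase.1 hr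
      obtain ⟨_, hradj⟩ := Finset.mem_filter.1 hrf
      exact Finset.mem_filter.2 ⟨Finset.mem_univ _,
        hy₁simp v r hvy₁ hradj (fun h => hrv h.symm)⟩
  have hTcard : T.card = d := by
    have h1 : y₁ ∉ (Finset.univ.filter (G.Adj y₁)).erase v := by
      intro hmem
      exact G.loopless.irrefl y₁ (Finset.mem_filter.1 (Finset.mem_of_mem_erase hmem)).2
    have h2 : v ∈ Finset.univ.filter (G.Adj y₁) := Finset.mem_filter.2 ⟨Finset.mem_univ _, hvy₁⟩
    rw [hTdef, Finset.card_insert_of_notMem h1, Finset.card_erase_of_mem h2]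
    have h3 : (Finset.univ.filter (G.Adj y₁)).card = d := hreg y₁
    have h4 : 1 ≤ (Finset.univ.filter (G.Adj y₁)).card := Finset.card_pos.2 ⟨v, h2⟩
    omega
  have hTeq : T = Finset.univ.filter (G.Adj v) := by
    refine Finset.eq_of_subset_of_card_le hTsub ?_
    rw [hTcard]
    have h3 : (Finset.univ.filter (G.Adj v)).card = d := hreg v
    omega
  have hqT : q ∈ T := by
    rw [hTeq]
    exact Finset.mem_filter.2 ⟨Finset.mem_univ _, hqadj.symm⟩
  rcases Finset.mem_insert.1 hqT with rfl | hq2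
  · exact hqC hy₁C
  · obtain ⟨hqv, hqf⟩ := Finset.mem_erase.1 hq2
    obtain ⟨_, hqadj'⟩ := Finset.mem_filter.1 hqf
    exact hqC (compIn_closed hy₁C (Finset.mem_erase.2 ⟨hqv, Finset.mem_univ q⟩) hqadj')

end Cert

/-- Brooks-type theorem for weak degeneracy. -/
theorem weaklyDegenerate_brooks' {V : Type*} [Fintype V] [DecidableEq V] (G : SimpleGraph V)
    [DecidableRel G.Adj] (d : ℕ) (hd : 3 ≤ d) (hconn : G.Connected)
    (hdeg : G.maxDegree = d) :
    Nonempty (G ≃g (⊤ : SimpleGraph (Fin (d + 1)))) ∨ WeaklyDegenerate G (d - 1) := by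
  classical
  have hconnU : ConnIn G (Finset.univ : Finset V) := by
    intro a _ b _
    obtain ⟨p⟩ := hconn.preconnected a b
    exact ⟨Finset.mem_univ a, Finset.mem_univ b, p, fun x _ => Finset.mem_univ x⟩
  have hdegS : ∀ v : V, degS G Finset.univ v = G.degree v := by
    intro v
    have hs : Finset.univ.filter (G.Adj v) = G.neighborFinset v := by
      ext w
      simp [SimpleGraph.mem_neighborFinset]
    unfold degS
    rw [Finset.filter_congr_decidable, hs]
    rfl
  have hdle : ∀ v : V, degS G Finset.univ v ≤ d := by
    intro v
    rw [hdegS v, ← hdeg]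
    exact G.degree_le_maxDegree v
  have hcast : ((d - 1 : ℕ) : ℤ) = (d : ℤ) - 1 := by
    omega
  by_cases hsmall : ∃ r : V, G.degree r < d
  · right
    obtain ⟨r, hr⟩ := hsmall
    unfold WeaklyDegenerate WeaklyDegenerateWith
    refine lemC Finset.univ.card Finset.univ _ r le_rfl hconnU (Finset.mem_univ r) ?_ ?_
    · intro v _
      have hc : (degS G Finset.univ v : ℤ) ≤ d := by exact_mod_cast hdle v
      rw [hcast]
      omega
    · have h1 : degS G Finset.univ r < d := by rw [hdegS r]; exact hr
      have hc : (degS G Finset.univ r : ℤ) < d := by exact_mod_cast h1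
      rw [hcast]
      omega
  · push_neg at hsmall
    have hregd : ∀ v : V, degS G Finset.univ v = d := by
      intro v
      refine le_antisymm (hdle v) ?_
      rw [hdegS v]
      exact hsmall v
    by_cases hcomp : ∀ a b : V, a ≠ b → G.Adj a b
    · left
      obtain ⟨x⟩ : Nonempty V := hconn.nonempty
      have hfil : Finset.univ.filter (G.Adj x) = Finset.univ.erase x := by
        ext w
        simp only [Finset.mem_filter, Finset.mem_erase, Finset.mem_univ, true_and, and_true]
        constructor
        · intro h; exact (G.ne_of_adj h).symm
        · intro h; exact hcomp x w (fun hh => h hh.symm)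
      have hcV : Fintype.card V = d + 1 := by
        have h1 := hregd x
        unfold degS at h1
        rw [Finset.filter_congr_decidable, hfil,
          Finset.card_erase_of_mem (Finset.mem_univ x), Finset.card_univ] at h1
        have h2 : 1 ≤ Fintype.card V := Fintype.card_pos_iff.2 ⟨x⟩
        omega
      refine ⟨⟨Fintype.equivFinOfCardEq hcV, ?_⟩⟩
      intro a b
      simp only [SimpleGraph.top_adj]
      constructor
      · intro h
        exact hcomp a b (fun hh => h (by rw [hh]))
      · intro h hh
        exact G.ne_of_adj h (Equiv.injective _ hh)
    · right
      obtain ⟨x, y, z, t, hxy, hxz, hxt, hyz, hyzne, hytne, hztne, hryz, hryt⟩ :=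
        cert_exists hconnU d hd hregd hcomp
      unfold WeaklyDegenerate WeaklyDegenerateWith
      have hmain := thmA Finset.univ.card Finset.univ le_rfl hconnU x y z t
        (Finset.mem_univ x) (Finset.mem_univ y) (Finset.mem_univ z) (Finset.mem_univ t)
        hxy hxz hxt hyz hyzne hytne hztne hryz hryt
      refine wd_congr hmain ?_
      intro v _
      rw [hcast, hregd v]

/-- Brooks-type theorem for weak degeneracy: a connected graph of maximum degree `d ≥ 3` is
weakly `(d - 1)`-degenerate unless it is the complete graph `K_{d+1}`. -/
theorem weaklyDegenerate_brooks {V : Type*} [Fintype V] [DecidableEq V] (G : SimpleGraph V)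
    [DecidableRel G.Adj] (d : ℕ) (hd : 3 ≤ d) (hconn : G.Connected)
    (hdeg : G.maxDegree = d) :
    Nonempty (G ≃g (⊤ : SimpleGraph (Fin (d + 1)))) ∨ WeaklyDegenerate G (d - 1) :=
  weaklyDegenerate_brooks' G d hd hconn hdeg

end WeakDeg
end

section
/- Let G be a finite simple triangle-free d-regular graph with n ≥ 4 vertices. Then wd(G) > d − √n − 1, where wd(G) denotes the weak degeneracy of G (the inequality is between real numbers, with wd(G) cast into the reals). -/
/-
Run an elimination witnessing weak `m`-degeneracy, `m = wd(G)`, and let `T` be the set of the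
last `t` vertices removed. When `T` is all that is left, its values still bound its number of
edges; before that, every edge from `T` to an earlier vertex cost `T` one unit, except for at most
one saved unit per earlier removal. Hence `e(T) + e(T, V ∖ T) ≤ t m + (n - t)`. By `d`-regularity
`e(T, V ∖ T) = t d - 2 e(T)`, and Mantel's bound `4 e(T) ≤ t²` gives
`4 t (d - m) ≤ t² + 4 (n - t)`. Taking `t = n` yields `4 (d - m) ≤ n`, and then `t = 2 (d - m)`
yields `(d - m)² ≤ n`.
-/


open scoped Classical

open Finset

namespace SimpleGraph

variable {V : Type*} (G : SimpleGraph V) [DecidableRel G.Adj]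

theorem card_interedges_eq_sum (s t : Finset V) :
    #(G.interedges s t) = ∑ v ∈ s, #{w ∈ t | G.Adj v w} := by
  rw [interedges_def, card_filter, sum_product]
  simp only [card_filter]

@[simp]
theorem interedges_empty_right (s : Finset V) : G.interedges s ∅ = ∅ := by
  simp [interedges_def]

theorem card_interedges_insert_left {s : Finset V} {u : V} (hu : u ∉ s) (t : Finset V) :
    #(G.interedges (insert u s) t) = #(G.interedges s t) + #{w ∈ t | G.Adj u w} := by
  rw [card_interedges_eq_sum, card_interedges_eq_sum, sum_insert hu, add_comm]

theorem card_interedges_insert_right (s : Finset V) {t : Finset V} {u : V} (hu : u ∉ t) :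
    #(G.interedges s (insert u t)) = #(G.interedges s t) + #{v ∈ s | G.Adj u v} := by
  simp only [card_interedges_eq_sum, filter_insert, card_filter (G.Adj u), ← sum_add_distrib]
  refine sum_congr rfl fun v _ => ?_
  split_ifs <;> simp_all [adj_comm]

theorem card_interedges_insert_self {s : Finset V} {u : V} (hu : u ∉ s) :
    #(G.interedges (insert u s) (insert u s)) =
      #(G.interedges s s) + 2 * #{v ∈ s | G.Adj u v} := by
  rw [card_interedges_insert_left G hu, card_interedges_insert_right G s hu, filter_insert,
    if_neg (G.irrefl)]
  ring

variable {G}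

theorem IsRegularOfDegree.card_interedges_add_card_interedges_compl [Fintype V]
    [G.LocallyFinite] {d : ℕ} (hG : G.IsRegularOfDegree d) (s t : Finset V) :
    #(G.interedges s t) + #(G.interedges s tᶜ) = d * #s := by
  have hsplit (v : V) : #{w ∈ t | G.Adj v w} + #{w ∈ tᶜ | G.Adj v w} = d := by
    rw [← hG v, ← card_neighborFinset_eq_degree,
      ← card_filter_add_card_filter_not (s := G.neighborFinset v) (· ∈ t)]
    congr 2 <;> ext <;> simp [and_comm]
  simp only [card_interedges_eq_sum, ← sum_add_distrib, hsplit, sum_const, smul_eq_mul, mul_comm]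

variable (G) in
theorem degree_induce_coe_finset (s : Finset V) (v : (s : Set V)) :
    (G.induce s).degree v = #{w ∈ s | G.Adj v w} := by
  rw [← card_neighborFinset_eq_degree, ← card_map (.subtype _)]
  congr 1
  ext w
  simp [and_comm]

variable (G) in
theorem card_interedges_self_eq_two_mul_card_edgeFinset_induce (s : Finset V) :
    #(G.interedges s s) = 2 * #(G.induce s).edgeFinset := by
  rw [← sum_degrees_eq_twice_card_edges, card_interedges_eq_sum]
  simp only [degree_induce_coe_finset]
  exact (sum_coe_sort s fun v => #{w ∈ s | G.Adj v w}).symm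

theorem CliqueFree.two_mul_card_interedges_self_le (hG : G.CliqueFree 3) (s : Finset V) :
    2 * #(G.interedges s s) ≤ #s ^ 2 := by
  have h := (hG.comap (Embedding.induce (s : Set V)).isContained).card_edgeFinset_le (r := 2)
  dsimp only at h
  rw [Nat.choose_eq_zero_of_lt (Nat.mod_lt _ two_pos)] at h
  simp only [coe_sort_coe, Fintype.card_coe] at h
  rw [card_interedges_self_eq_two_mul_card_edgeFinset_induce]
  have := Nat.mul_div_le ((#s ^ 2 - (#s % 2) ^ 2) * (2 - 1)) (2 * 2)
  omega

end SimpleGraph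

namespace WeakDeg

variable {V : Type*} {G : SimpleGraph V}

/-- `T` is the set of the last `t` vertices removed, and `#S - t` bounds the number of decrements
of `T` saved by the earlier removals. -/
def TailEdgeBound (G : SimpleGraph V) (S : Finset V) (f : V → ℤ) : Prop :=
  ∀ t ≤ #S, ∃ T ⊆ S, #T = t ∧
    (#(G.interedges T T) : ℤ) + 2 * #(G.interedges T (S \ T)) ≤ 2 * (∑ v ∈ T, f v + (#S - t))

/-- `c = 0` for `Delete` and `c = 1` for `DelSave`. -/
theorem tailEdgeBound_insert {S : Finset V} {u : V} (hu : u ∉ S) {f g : V → ℤ} {c : ℤ}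
    (hc : c ≤ 1) (hcu : c ≤ f u)
    (hg : ∀ X ⊆ S, ∑ v ∈ X, g v + #{v ∈ X | G.Adj u v} ≤ ∑ v ∈ X, f v + c)
    (h : TailEdgeBound G S g) : TailEdgeBound G (insert u S) f := by
  intro t ht
  rw [card_insert_of_notMem hu] at ht ⊢
  rcases ht.lt_or_eq with ht | rfl
  · obtain ⟨T, hTS, rfl, hT⟩ := h t (by omega)
    have hsdiff : insert u S \ T = insert u (S \ T) :=
      insert_sdiff_of_notMem _ fun huT => hu (hTS huT)
    refine ⟨T, hTS.trans (subset_insert u S), rfl, ?_⟩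
    rw [hsdiff, G.card_interedges_insert_right T (fun h => hu (mem_sdiff.1 h).1)]
    have := hg T hTS
    push_cast
    linarith
  · obtain ⟨T, hTS, hTcard, hT⟩ := h #S le_rfl
    obtain rfl := eq_of_subset_of_card_le hTS hTcard.ge
    refine ⟨insert u T, Subset.rfl, card_insert_of_notMem hu, ?_⟩
    rw [G.card_interedges_insert_self hu, sum_insert hu]
    have := hg T Subset.rfl
    simp only [sdiff_self, bot_eq_empty, SimpleGraph.interedges_empty_right, card_empty,
      sub_self] at hT ⊢
    push_cast
    linarith

theorem sum_ite_sub_one (X : Finset V) (f : V → ℤ) (p : V → Prop) [DecidablePred p] :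
    ∑ v ∈ X, (if p v then f v - 1 else f v) = ∑ v ∈ X, f v - #{v ∈ X | p v} := by
  rw [card_filter, Nat.cast_sum, ← sum_sub_distrib]
  exact sum_congr rfl fun v _ => by split_ifs <;> simp

theorem WeakDegenOn.tailEdgeBound {S : Finset V} {f : V → ℤ} (h : WeakDegenOn G S f)
    (hf : ∀ v ∈ S, 0 ≤ f v) : TailEdgeBound G S f := by
  induction h with
  | empty f =>
    intro t ht
    obtain rfl : t = 0 := by simpa using ht
    exact ⟨∅, Subset.rfl, rfl, by simp⟩
  | delete S f u hu hleg _ ih =>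
    rw [← insert_erase hu]
    refine tailEdgeBound_insert (notMem_erase u S) zero_le_one (hf u hu) (fun X _ => ?_) (ih hleg)
    rw [sum_ite_sub_one]
    simp
  | delSave S f u w hu hw _ hlt hleg _ ih =>
    rw [← insert_erase hu]
    refine tailEdgeBound_insert (notMem_erase u S) le_rfl (by linarith [hf w hw])
      (fun X _ => ?_) (ih hleg)
    have hsaved : #{v ∈ X | G.Adj u v} ≤ #{v ∈ X | G.Adj u v ∧ v ≠ w} + 1 :=
      calc #{v ∈ X | G.Adj u v}
          ≤ #(insert w {v ∈ X | G.Adj u v ∧ v ≠ w}) :=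
            card_le_card fun v hv => by by_cases v = w <;> simp_all
        _ ≤ #{v ∈ X | G.Adj u v ∧ v ≠ w} + 1 := card_insert_le _ _
    rw [sum_ite_sub_one]
    omega

theorem weakDegenOn_of_card_le (S : Finset V) {f : V → ℤ} (hf : ∀ v ∈ S, (#S : ℤ) ≤ f v + 1) :
    WeakDegenOn G S f := by
  induction S using Finset.induction_on generalizing f with
  | empty => exact .empty f
  | insert u S hu ih =>
    have hf' (v) (hv : v ∈ S) : (#S : ℤ) + 1 ≤ f v + 1 := by
      simpa [card_insert_of_notMem hu] using hf v (mem_insert_of_mem hv)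
    refine .delete _ f u (mem_insert_self u S) (fun v hv => ?_) ?_
    · rw [erase_insert hu] at hv
      have : 0 < #S := card_pos.2 ⟨v, hv⟩
      split_ifs <;> linarith [hf' v hv]
    · rw [erase_insert hu]
      exact ih fun v hv => by split_ifs <;> linarith [hf' v hv]

theorem weaklyDegenerate_weakDegeneracy (G : SimpleGraph V) [Fintype V] :
    WeaklyDegenerate G (weakDegeneracy G) :=
  Nat.sInf_mem (s := {d | WeaklyDegenerate G d})
    ⟨Fintype.card V, weakDegenOn_of_card_le univ fun v _ => by simp⟩

theorem four_mul_sub_weakDegeneracy_le [Fintype V] [G.LocallyFinite] {d : ℕ}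
    (htf : G.CliqueFree 3) (hreg : G.IsRegularOfDegree d) {t : ℕ} (ht : t ≤ Fintype.card V) :
    4 * t * ((d : ℤ) - weakDegeneracy G) ≤ t ^ 2 + 4 * (Fintype.card V - t) := by
  obtain ⟨T, -, rfl, hT⟩ := (weaklyDegenerate_weakDegeneracy G).tailEdgeBound
    (fun _ _ => Int.natCast_nonneg _) t (by simpa using ht)
  rw [← compl_eq_univ_sdiff, sum_const, card_univ, nsmul_eq_mul] at hT
  have hdeg : (#(G.interedges T T) : ℤ) + #(G.interedges T Tᶜ) = d * #T := by
    exact_mod_cast hreg.card_interedges_add_card_interedges_compl T T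
  have hmantel : 2 * (#(G.interedges T T) : ℤ) ≤ #T ^ 2 := by
    exact_mod_cast htf.two_mul_card_interedges_self_le T
  nlinarith

/-- If `G` is a triangle-free `d`-regular graph with `n ≥ 4` vertices, then
`wd(G) > d - √n - 1`. -/
theorem weakDegeneracy_lower_bound_triangleFree {V : Type*} [Fintype V] (G : SimpleGraph V)
    [DecidableRel G.Adj] (d : ℕ) (hn : 4 ≤ Fintype.card V) (htf : G.CliqueFree 3)
    (hreg : G.IsRegularOfDegree d) :
    (d : ℝ) - Real.sqrt (Fintype.card V) - 1 < (weakDegeneracy G : ℝ) := by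
  set n := Fintype.card V
  rcases le_or_gt d (weakDegeneracy G) with hle | hlt
  · have : (d : ℝ) ≤ weakDegeneracy G := by exact_mod_cast hle
    linarith [Real.sqrt_nonneg n]
  obtain ⟨k, hk⟩ := Nat.exists_eq_add_of_le hlt.le
  have hbound (t : ℕ) (ht : t ≤ n) : 4 * t * (k : ℤ) ≤ t ^ 2 + 4 * (n - t) := by
    have := four_mul_sub_weakDegeneracy_le htf hreg ht
    rwa [hk, Nat.cast_add, add_sub_cancel_left] at this
  have h4k : 4 * k ≤ n := by
    have := hbound n le_rfl
    nlinarith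
  have hk2 : k ^ 2 ≤ n := by
    have := hbound (2 * k) (by omega)
    push_cast at this
    nlinarith
  have : (k : ℝ) ≤ √n := Real.le_sqrt_of_sq_le (by exact_mod_cast hk2)
  rw [hk]
  push_cast
  linarith

end WeakDeg
end

section
/- For every d ≥ 2, the complete bipartite graph K_{d,d} satisfies wd(K_{d,d}) > d − √(2d) − 1, where wd denotes the weak degeneracy (the inequality is between real numbers, with wd(K_{d,d}) cast into the reals). -/
open scoped Classical

namespace WeakDeg

variable {V : Type*}

/-! ### Auxiliary development for the lower bound on `wd(K_{d,d})` -/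

/-- Easy sufficient condition: if every vertex of `S` has value at least `|S| - 1`, the
process can be completed by plain deletions. -/
lemma weakDegenOn_of_big (G : SimpleGraph V) :
    ∀ (n : ℕ) (S : Finset V) (f : V → ℤ), S.card = n →
      (∀ v ∈ S, (S.card : ℤ) ≤ f v + 1) → WeakDegenOn G S f := by
  intro n
  induction n with
  | zero =>
    intro S f hc _
    rw [Finset.card_eq_zero.mp hc]
    exact WeakDegenOn.empty f
  | succ n ih =>
    intro S f hc hf
    have hpos : 0 < S.card := by omega
    obtain ⟨u, hu⟩ := Finset.card_pos.mp hpos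
    refine WeakDegenOn.delete S f u hu ?_ ?_
    · intro v hv
      have hv' : v ∈ S := Finset.mem_of_mem_erase hv
      have hne : v ≠ u := Finset.ne_of_mem_erase hv
      have h2 : 2 ≤ S.card := Finset.one_lt_card.mpr ⟨v, hv', u, hu, hne⟩
      have := hf v hv'
      by_cases h : G.Adj u v
      · rw [if_pos h]
        have : (2 : ℤ) ≤ (S.card : ℤ) := by exact_mod_cast h2
        linarith [hf v hv']
      · rw [if_neg h]
        have : (1 : ℤ) ≤ (S.card : ℤ) := by exact_mod_cast hpos
        linarith [hf v hv']
    · apply ih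
      · rw [Finset.card_erase_of_mem hu, hc]
        omega
      · intro v hv
        have hv' : v ∈ S := Finset.mem_of_mem_erase hv
        have hcard : ((S.erase u).card : ℤ) = (S.card : ℤ) - 1 := by
          rw [Finset.card_erase_of_mem hu]
          have : 1 ≤ S.card := hpos
          push_cast [Nat.cast_sub this]
          ring
        have := hf v hv'
        by_cases h : G.Adj u v
        · rw [if_pos h]; rw [hcard]; linarith
        · rw [if_neg h]; rw [hcard]; linarith

/-- The effect of removing `u` with save target `o` on the value function. -/
noncomputable def stepf (G : SimpleGraph V) (f : V → ℤ) (u : V) (o : Option V) (v : V) : ℤ :=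
  if G.Adj u v ∧ o ≠ some v then f v - 1 else f v

/-- A valid removal sequence (with optional save targets). -/
def Steps (G : SimpleGraph V) : (V → ℤ) → List (V × Option V) → Prop
  | _, [] => True
  | f, (u, o) :: t =>
      (∀ v ∈ t.map Prod.fst, 0 ≤ stepf G f u o v) ∧
      (∀ w : V, o = some w → G.Adj u w) ∧
      Steps G (stepf G f u o) t

lemma steps_nil (G : SimpleGraph V) (f : V → ℤ) : Steps G f [] := trivial

lemma steps_cons (G : SimpleGraph V) (f : V → ℤ) (u : V) (o : Option V)
    (t : List (V × Option V)) :
    Steps G f ((u, o) :: t) ↔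
      (∀ v ∈ t.map Prod.fst, 0 ≤ stepf G f u o v) ∧
      (∀ w : V, o = some w → G.Adj u w) ∧
      Steps G (stepf G f u o) t := Iff.rfl

/-- Extract a linear removal sequence from a `WeakDegenOn` derivation. -/
lemma exists_steps {G : SimpleGraph V} {S : Finset V} {f : V → ℤ}
    (h : WeakDegenOn G S f) :
    ∃ l : List (V × Option V), Steps G f l ∧ (l.map Prod.fst).Nodup ∧
      (∀ v : V, v ∈ l.map Prod.fst ↔ v ∈ S) := by
  induction h with
  | empty f => exact ⟨[], trivial, List.nodup_nil, by simp⟩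
  | delete S f u hu hleg h ih =>
    obtain ⟨l, hs, hnd, hts⟩ := ih
    have hfun : stepf G f u none = fun v => if G.Adj u v then f v - 1 else f v := by
      funext v
      by_cases h : G.Adj u v <;> simp [stepf, h]
    have hmem : u ∉ l.map Prod.fst := by
      intro hmem
      have : u ∈ S.erase u := (hts u).mp hmem
      simp at this
    refine ⟨(u, none) :: l, ⟨?_, by simp, by rw [hfun]; exact hs⟩, ?_, ?_⟩
    · intro v hv
      have hv' : v ∈ S.erase u := (hts v).mp hv
      have := hleg v hv'
      rw [hfun]
      exact this
    · simp only [List.map_cons, List.nodup_cons]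
      exact ⟨hmem, hnd⟩
    · intro v
      simp only [List.map_cons, List.mem_cons, hts, Finset.mem_erase]
      constructor
      · rintro (rfl | ⟨_, h⟩)
        · exact hu
        · exact h
      · intro hvS
        by_cases hvu : v = u
        · exact Or.inl hvu
        · exact Or.inr ⟨hvu, hvS⟩
  | delSave S f u w hu hw hadj hlt hleg h ih =>
    obtain ⟨l, hs, hnd, hts⟩ := ih
    have hfun : stepf G f u (some w) = fun v => if G.Adj u v ∧ v ≠ w then f v - 1 else f v := by
      funext v
      by_cases hvw : v = w
      · subst hvw
        simp [stepf]
      · by_cases h : G.Adj u v <;>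
          simp [stepf, h, hvw, Ne.symm hvw]
    have hmem : u ∉ l.map Prod.fst := by
      intro hmem
      have : u ∈ S.erase u := (hts u).mp hmem
      simp at this
    refine ⟨(u, some w) :: l, ⟨?_, ?_, by rw [hfun]; exact hs⟩, ?_, ?_⟩
    · intro v hv
      have hv' : v ∈ S.erase u := (hts v).mp hv
      have := hleg v hv'
      rw [hfun]
      exact this
    · intro w' hw'
      obtain rfl : w = w' := by injection hw'
      exact hadj
    · simp only [List.map_cons, List.nodup_cons]
      exact ⟨hmem, hnd⟩
    · intro v
      simp only [List.map_cons, List.mem_cons, hts, Finset.mem_erase]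
      constructor
      · rintro (rfl | ⟨_, h⟩)
        · exact hu
        · exact h
      · intro hvS
        by_cases hvu : v = u
        · exact Or.inl hvu
        · exact Or.inr ⟨hvu, hvS⟩

/-- The cost of a removal sequence: each step pays `(#opposite-side removals before it) - k`,
truncated at 0.  `i`/`j` are accumulators counting the `true`-side resp. `false`-side steps
already performed. -/
def costF (side : V → Bool) (k : ℕ) : ℕ → ℕ → List (V × Option V) → ℕ
  | _, _, [] => 0
  | i, j, s :: t =>
      if side s.1 then (j - k) + costF side k (i + 1) j t
      else (i - k) + costF side k i (j + 1) t

lemma costF_concat (side : V → Bool) (k : ℕ) :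
    ∀ (l : List (V × Option V)) (i j : ℕ) (s : V × Option V),
      costF side k i j (l ++ [s]) = costF side k i j l +
        (if side s.1 then (j + l.countP (fun x => !(side x.1))) - k
         else (i + l.countP (fun x => side x.1)) - k) := by
  intro l
  induction l with
  | nil =>
    intro i j s
    by_cases hs : side s.1 <;> simp [costF, hs]
  | cons c t ih =>
    intro i j s
    by_cases hc : side c.1
    · by_cases hs : side s.1 <;>
        simp [costF, hc, hs, List.countP_cons, ih] <;> omega
    · by_cases hs : side s.1 <;>
        simp [costF, hc, hs, List.countP_cons, ih] <;> omega

/-- Lower bound on the cost: at least `(#A-steps - k) * (#B-steps - k)`. -/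
lemma costF_lb (side : V → Bool) (k : ℕ) (l : List (V × Option V)) :
    (l.countP (fun x => side x.1) - k) * (l.countP (fun x => !(side x.1)) - k) ≤
      costF side k 0 0 l := by
  induction l using List.reverseRecOn with
  | nil => simp [costF]
  | append_singleton t s ih =>
    rw [costF_concat]
    by_cases hs : side s.1
    · have hA : (t ++ [s]).countP (fun x => side x.1) = t.countP (fun x => side x.1) + 1 := by
        simp [List.countP_append, hs]
      have hB : (t ++ [s]).countP (fun x => !(side x.1)) = t.countP (fun x => !(side x.1)) := by
        simp [List.countP_append, hs]
      rw [hA, hB, if_pos hs]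
      set a := t.countP (fun x => side x.1)
      set b := t.countP (fun x => !(side x.1))
      have h1 : a + 1 - k ≤ (a - k) + 1 := by omega
      calc (a + 1 - k) * (b - k) ≤ ((a - k) + 1) * (b - k) := Nat.mul_le_mul_right _ h1
        _ = (a - k) * (b - k) + (b - k) := by ring
        _ ≤ costF side k 0 0 t + ((0 + b) - k) := by
            have : (0 + b) - k = b - k := by omega
            rw [this]
            exact Nat.add_le_add_right ih _
    · have hA : (t ++ [s]).countP (fun x => side x.1) = t.countP (fun x => side x.1) := by
        simp [List.countP_append, hs]
      have hB : (t ++ [s]).countP (fun x => !(side x.1)) =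
          t.countP (fun x => !(side x.1)) + 1 := by
        simp [List.countP_append, hs]
      rw [hA, hB, if_neg hs]
      set a := t.countP (fun x => side x.1)
      set b := t.countP (fun x => !(side x.1))
      have h1 : b + 1 - k ≤ (b - k) + 1 := by omega
      calc (a - k) * (b + 1 - k) ≤ (a - k) * ((b - k) + 1) := Nat.mul_le_mul_left _ h1
        _ = (a - k) * (b - k) + (a - k) := by ring
        _ ≤ costF side k 0 0 t + ((0 + a) - k) := by
            have : (0 + a) - k = a - k := by omega
            rw [this]
            exact Nat.add_le_add_right ih _

lemma sum_update_le (o : Option V) (σ : V → ℕ) :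
    ∀ (xs : List V), xs.Nodup →
      (xs.map (fun v => if o = some v then σ v + 1 else σ v)).sum ≤
        (xs.map σ).sum + (if o.isSome then 1 else 0) := by
  intro xs
  induction xs with
  | nil => intro _; simp
  | cons x t ih =>
    intro hnd
    rw [List.nodup_cons] at hnd
    by_cases hx : o = some x
    · have htail : t.map (fun v => if o = some v then σ v + 1 else σ v) = t.map σ := by
        apply List.map_congr_left
        intro v hv
        have : o ≠ some v := by
          rw [hx]
          intro h
          obtain rfl : x = v := by injection h
          exact hnd.1 hv
        rw [if_neg this]
      have hsome : o.isSome = true := by rw [hx]; rfl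
      simp only [List.map_cons, List.sum_cons, if_pos hx, htail, hsome, if_pos]
      omega
    · have := ih hnd.2
      simp only [List.map_cons, List.sum_cons, if_neg hx]
      omega

/-- Upper bound on the cost, given a valid removal sequence on a complete bipartite graph.
`σ v` records the number of saves vertex `v` has received so far. -/
lemma costF_ub {G : SimpleGraph V} (side : V → Bool) (k : ℕ)
    (hAdj : ∀ u v : V, G.Adj u v ↔ ¬(side u = side v)) :
    ∀ (l : List (V × Option V)) (f : V → ℤ) (σ : V → ℕ) (i j : ℕ),
      Steps G f l → (l.map Prod.fst).Nodup →
      (∀ v ∈ l.map Prod.fst, 0 ≤ f v) →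
      (∀ v ∈ l.map Prod.fst,
        f v + (if side v then (j : ℤ) else (i : ℤ)) = (k : ℤ) + σ v) →
      costF side k i j l ≤ ((l.map Prod.fst).map σ).sum + l.countP (fun s => s.2.isSome) := by
  intro l
  induction l with
  | nil => intro f σ i j _ _ _ _; simp [costF]
  | cons s t ih =>
    obtain ⟨u, o⟩ := s
    intro f σ i j hst hnd hnn hinv
    obtain ⟨hleg, hsave, hst'⟩ := hst
    have hu0 : 0 ≤ f u := hnn u (by simp)
    have huinv := hinv u (by simp)
    have hndt : (t.map Prod.fst).Nodup := by
      simp only [List.map_cons, List.nodup_cons] at hnd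
      exact hnd.2
    set σ' : V → ℕ := fun v => if o = some v then σ v + 1 else σ v with hσ'
    have hsum : ((t.map Prod.fst).map σ').sum ≤
        ((t.map Prod.fst).map σ).sum + (if o.isSome then 1 else 0) :=
      sum_update_le o σ _ hndt
    have hcount : ((u, o) :: t).countP (fun s => s.2.isSome) =
        t.countP (fun s => s.2.isSome) + (if o.isSome then 1 else 0) := by
      simp [List.countP_cons]
    by_cases hu : side u
    · -- u is on the `true` side; cost of this step is `j - k`
      have hjk : j - k ≤ σ u := by
        rw [if_pos hu] at huinv
        have : (j : ℤ) ≤ (k : ℤ) + σ u := by linarith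
        have : j ≤ k + σ u := by exact_mod_cast this
        omega
      have hinv' : ∀ v ∈ t.map Prod.fst,
          stepf G f u o v + (if side v then (j : ℤ) else ((i + 1 : ℕ) : ℤ)) =
            (k : ℤ) + σ' v := by
        intro v hv
        have hvl : v ∈ ((u, o) :: t).map Prod.fst := by simp [hv]
        have hbase := hinv v hvl
        by_cases hsv : side v
        · have hnadj : ¬ G.Adj u v := by rw [hAdj]; simp [hu, hsv]
          have ho : o ≠ some v := fun h => hnadj (hsave v h)
          have h1 : stepf G f u o v = f v := by simp [stepf, hnadj]
          have h2 : σ' v = σ v := by rw [hσ']; simp [ho]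
          rw [h1, h2, if_pos hsv]
          rw [if_pos hsv] at hbase
          exact hbase
        · have hadjv : G.Adj u v := by rw [hAdj]; simp [hu, hsv]
          rw [if_neg hsv] at hbase
          by_cases ho : o = some v
          · have h1 : stepf G f u o v = f v := by simp [stepf, ho]
            have h2 : σ' v = σ v + 1 := by rw [hσ']; simp [ho]
            rw [h1, h2, if_neg hsv]
            push_cast
            linarith
          · have h1 : stepf G f u o v = f v - 1 := by simp [stepf, hadjv, ho]
            have h2 : σ' v = σ v := by rw [hσ']; simp [ho]
            rw [h1, h2, if_neg hsv]
            push_cast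
            linarith
      have ht := ih (stepf G f u o) σ' (i + 1) j hst' hndt hleg hinv'
      have hcost : costF side k i j ((u, o) :: t) = (j - k) + costF side k (i + 1) j t := by
        simp [costF, hu]
      rw [hcost]
      simp only [List.map_cons, List.sum_cons]
      rw [hcount]
      omega
    · -- u is on the `false` side; cost of this step is `i - k`
      have hik : i - k ≤ σ u := by
        rw [if_neg hu] at huinv
        have : (i : ℤ) ≤ (k : ℤ) + σ u := by linarith
        have : i ≤ k + σ u := by exact_mod_cast this
        omega
      have hinv' : ∀ v ∈ t.map Prod.fst,
          stepf G f u o v + (if side v then ((j + 1 : ℕ) : ℤ) else (i : ℤ)) =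
            (k : ℤ) + σ' v := by
        intro v hv
        have hvl : v ∈ ((u, o) :: t).map Prod.fst := by simp [hv]
        have hbase := hinv v hvl
        by_cases hsv : side v
        · have hadjv : G.Adj u v := by rw [hAdj]; simp [hu, hsv]
          rw [if_pos hsv] at hbase
          by_cases ho : o = some v
          · have h1 : stepf G f u o v = f v := by simp [stepf, ho]
            have h2 : σ' v = σ v + 1 := by rw [hσ']; simp [ho]
            rw [h1, h2, if_pos hsv]
            push_cast
            linarith
          · have h1 : stepf G f u o v = f v - 1 := by simp [stepf, hadjv, ho]
            have h2 : σ' v = σ v := by rw [hσ']; simp [ho]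
            rw [h1, h2, if_pos hsv]
            push_cast
            linarith
        · have hnadj : ¬ G.Adj u v := by rw [hAdj]; simp [hu, hsv]
          have ho : o ≠ some v := fun h => hnadj (hsave v h)
          have h1 : stepf G f u o v = f v := by simp [stepf, hnadj]
          have h2 : σ' v = σ v := by rw [hσ']; simp [ho]
          rw [h1, h2, if_neg hsv]
          rw [if_neg hsv] at hbase
          exact hbase
      have ht := ih (stepf G f u o) σ' i (j + 1) hst' hndt hleg hinv'
      have hcost : costF side k i j ((u, o) :: t) = (i - k) + costF side k i (j + 1) t := by
        simp [costF, hu]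
      rw [hcost]
      simp only [List.map_cons, List.sum_cons]
      rw [hcount]
      omega

section Bipartite

variable (d : ℕ)

lemma cbg_adj (u v : Fin d ⊕ Fin d) :
    (completeBipartiteGraph (Fin d) (Fin d)).Adj u v ↔ ¬(u.isLeft = v.isLeft) := by
  cases u <;> cases v <;> simp

lemma filter_isLeft_card :
    (Finset.univ.filter (fun v : Fin d ⊕ Fin d => v.isLeft = true)).card = d := by
  have : (Finset.univ.filter (fun v : Fin d ⊕ Fin d => v.isLeft = true)) =
      Finset.univ.map ⟨Sum.inl, Sum.inl_injective⟩ := by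
    ext x
    cases x <;> simp
  rw [this, Finset.card_map, Finset.card_univ, Fintype.card_fin]

lemma filter_isRight_card :
    (Finset.univ.filter (fun v : Fin d ⊕ Fin d => (!v.isLeft) = true)).card = d := by
  have : (Finset.univ.filter (fun v : Fin d ⊕ Fin d => (!v.isLeft) = true)) =
      Finset.univ.map ⟨Sum.inr, Sum.inr_injective⟩ := by
    ext x
    cases x <;> simp
  rw [this, Finset.card_map, Finset.card_univ, Fintype.card_fin]

/-- The key combinatorial bound: if `K_{d,d}` is weakly `k`-degenerate then `(d-k)² ≤ 2d`. -/
lemma key_bound (k : ℕ)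
    (h : WeaklyDegenerate (completeBipartiteGraph (Fin d) (Fin d)) k) :
    (d - k) * (d - k) ≤ 2 * d := by
  have h' : WeakDegenOn (completeBipartiteGraph (Fin d) (Fin d)) Finset.univ
      (fun _ => (k : ℤ)) := h
  obtain ⟨l, hs, hnd, hts⟩ := exists_steps h'
  have htf : (l.map Prod.fst).toFinset = Finset.univ := by
    ext v
    simpa [List.mem_toFinset] using hts v
  -- counting : number of steps on each side
  have hcountP : ∀ p : (Fin d ⊕ Fin d) → Bool,
      l.countP (fun x => p x.1) = (Finset.univ.filter (fun v => p v = true)).card := by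
    intro p
    have h1 : l.countP (fun x => p x.1) = (l.map Prod.fst).countP p := by
      rw [List.countP_map]
      rfl
    rw [h1, List.countP_eq_length_filter]
    have h2 : ((l.map Prod.fst).filter p).Nodup := hnd.filter p
    rw [← List.toFinset_card_of_nodup h2, List.toFinset_filter, htf]
  have hA : l.countP (fun x => x.1.isLeft) = d := by
    rw [hcountP (fun v => v.isLeft), filter_isLeft_card]
  have hB : l.countP (fun x => !x.1.isLeft) = d := by
    rw [hcountP (fun v => !v.isLeft), filter_isRight_card]
  have hlen : l.length = 2 * d := by
    have h1 : (l.map Prod.fst).length = l.length := List.length_map _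
    have h2 : (l.map Prod.fst).toFinset.card = (l.map Prod.fst).length :=
      List.toFinset_card_of_nodup hnd
    rw [htf] at h2
    have h3 : (Finset.univ : Finset (Fin d ⊕ Fin d)).card = 2 * d := by
      rw [Finset.card_univ, Fintype.card_sum, Fintype.card_fin]
      omega
    omega
  -- lower bound
  have hlb : (d - k) * (d - k) ≤ costF (fun v => v.isLeft) k 0 0 l := by
    have := costF_lb (fun v : Fin d ⊕ Fin d => v.isLeft) k l
    rwa [hA, hB] at this
  -- upper bound
  have hub : costF (fun v => v.isLeft) k 0 0 l ≤ 2 * d := by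
    have hadj : ∀ u v : Fin d ⊕ Fin d,
        (completeBipartiteGraph (Fin d) (Fin d)).Adj u v ↔ ¬(u.isLeft = v.isLeft) :=
      cbg_adj d
    have h0 := costF_ub (fun v : Fin d ⊕ Fin d => v.isLeft) k hadj l
      (fun _ => (k : ℤ)) (fun _ => 0) 0 0 hs hnd
      (fun v _ => by positivity)
      (fun v _ => by by_cases h : v.isLeft <;> simp [h])
    have hzero : ((l.map Prod.fst).map (fun _ => (0 : ℕ))).sum = 0 := by
      apply List.sum_eq_zero
      intro x hx
      obtain ⟨y, -, h⟩ := List.mem_map.mp hx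
      exact h.symm
    rw [hzero] at h0
    have := List.countP_le_length (p := fun s : (Fin d ⊕ Fin d) × Option (Fin d ⊕ Fin d) =>
      s.2.isSome) (l := l)
    omega
  omega

end Bipartite

/-- For every `d ≥ 2`, the complete bipartite graph `K_{d,d}` satisfies
`wd(K_{d,d}) > d - √(2d) - 1`. -/
theorem weakDegeneracy_completeBipartite (d : ℕ) (hd : 2 ≤ d) :
    (d : ℝ) - Real.sqrt (2 * d) - 1 <
      (weakDegeneracy (completeBipartiteGraph (Fin d) (Fin d)) : ℝ) := by
  set G := completeBipartiteGraph (Fin d) (Fin d) with hG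
  have hbig : WeaklyDegenerate G (2 * d) := by
    show WeakDegenOn G (Finset.univ : Finset (Fin d ⊕ Fin d)) fun _ => ((2 * d : ℕ) : ℤ)
    apply weakDegenOn_of_big G ((Finset.univ : Finset (Fin d ⊕ Fin d)).card)
    · rfl
    · intro v _
      have : (Finset.univ : Finset (Fin d ⊕ Fin d)).card = 2 * d := by
        rw [Finset.card_univ, Fintype.card_sum, Fintype.card_fin]
        omega
      rw [this]
      push_cast
      linarith
  have hne : {k : ℕ | WeaklyDegenerate G k}.Nonempty := ⟨2 * d, hbig⟩
  have hmem : WeaklyDegenerate G (weakDegeneracy G) := Nat.sInf_mem hne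
  set w := weakDegeneracy G with hw
  have hkey : (d - w) * (d - w) ≤ 2 * d := key_bound d w hmem
  have h2d0 : (0 : ℝ) < 2 * d := by positivity
  have hsqrt_pos : 0 < Real.sqrt (2 * d) := Real.sqrt_pos.mpr h2d0
  rcases le_or_gt d w with hle | hlt
  · have : (d : ℝ) ≤ w := by exact_mod_cast hle
    linarith
  · set m : ℕ := d - w with hm
    have hm1 : 1 ≤ m := by omega
    have hmd : m ≤ d := by omega
    have hmsq : ((m : ℝ)) ^ 2 ≤ 2 * d := by
      have : (m * m : ℕ) ≤ 2 * d := hkey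
      have h2 : ((m * m : ℕ) : ℝ) ≤ ((2 * d : ℕ) : ℝ) := by exact_mod_cast this
      push_cast at h2
      nlinarith [h2]
    have hmle : (m : ℝ) ≤ Real.sqrt (2 * d) := by
      by_contra hcon
      push_neg at hcon
      have hsq : Real.sqrt (2 * d) ^ 2 = 2 * d := Real.sq_sqrt h2d0.le
      have hmpos : (0 : ℝ) ≤ m := by positivity
      nlinarith [hcon, hsq, Real.sqrt_nonneg (2 * (d : ℝ))]
    have hwd : (w : ℝ) = (d : ℝ) - m := by
      have : w + m = d := by omega
      have := congrArg (fun n : ℕ => (n : ℝ)) this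
      push_cast at this
      linarith
    rw [hwd]
    linarith

end WeakDeg
end

section
/- Let G be a finite connected simple graph and let f : V(G) → ℕ be a function such that f(u) ≥ deg_G(u) − 1 for all vertices u, and f(x) ≥ deg_G(x) for some vertex x. Then G is f-degenerate. -/
/-! Pick `x` with `f x ≥ deg x` and delete the other vertices in order of decreasing distance
from `x`, deleting `x` last. A vertex `v ≠ x` still present keeps its neighbour on a shortest path
to `x`, so it loses at most `deg v - 1 ≤ f v` from its value; `x` loses at most `deg x ≤ f x`. -/

open scoped Classical

namespace WeakDeg

variable {V : Type*}

/-- `DegenOn G S f` means: starting from the induced subgraph `G[S]` with value function `f`,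
it is possible to remove all vertices by a sequence of legal applications of `Delete` alone. -/
inductive DegenOn (G : SimpleGraph V) : Finset V → (V → ℤ) → Prop
  | empty (f : V → ℤ) : DegenOn G ∅ f
  | delete (S : Finset V) (f : V → ℤ) (u : V) (hu : u ∈ S)
      (hleg : ∀ v ∈ S.erase u, 0 ≤ if G.Adj u v then f v - 1 else f v)
      (h : DegenOn G (S.erase u) fun v => if G.Adj u v then f v - 1 else f v) :
      DegenOn G S f


open SimpleGraph Finset

theorem _root_.SimpleGraph.Connected.exists_adj_dist_lt {V : Type*} {G : SimpleGraph V}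
    (hconn : G.Connected) {x v : V} (hvx : v ≠ x) :
    ∃ w, G.Adj v w ∧ G.dist x w < G.dist x v := by
  obtain ⟨p, hp⟩ := (hconn v x).exists_walk_length_eq_dist
  cases p with
  | nil => exact absurd rfl hvx
  | cons hadj q =>
    refine ⟨_, hadj, ?_⟩
    have hq : G.dist _ x ≤ q.length := dist_le q
    rw [Walk.length_cons] at hp
    rw [dist_comm, dist_comm (u := x)]
    omega

variable {G : SimpleGraph V}

theorem card_filter_adj_univ [Fintype V] [DecidableRel G.Adj] (v : V) [DecidablePred (G.Adj v)] :
    #(univ.filter (G.Adj v)) = G.degree v := by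
  rw [← card_neighborFinset_eq_degree, neighborFinset_eq_filter]
  congr!

theorem card_filter_adj_erase {S : Finset V} {u v : V} (hu : u ∈ S) :
    (#((S.erase u).filter (G.Adj v)) : ℤ) =
      #(S.filter (G.Adj v)) - if G.Adj u v then 1 else 0 := by
  rw [filter_erase]
  split_ifs with huv
  · rw [card_erase_of_mem (mem_filter.2 ⟨hu, huv.symm⟩), Nat.cast_sub]
    · simp
    · exact card_pos.2 ⟨u, mem_filter.2 ⟨hu, huv.symm⟩⟩
  · rw [erase_eq_of_notMem fun h => huv (mem_filter.1 h).2.symm, sub_zero]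

/-- Here `d` plays the role of the distance from `x`. -/
structure DegreeBounds (G : SimpleGraph V) (x : V) (d : V → ℕ) (S : Finset V) (f : V → ℤ) :
    Prop where
  root_mem : x ∈ S
  card_adj_le : ∀ v ∈ S, (#(S.filter (G.Adj v)) : ℤ) ≤ f v + 1
  card_adj_root_le : (#(S.filter (G.Adj x)) : ℤ) ≤ f x
  exists_adj_lt : ∀ v ∈ S, v ≠ x → ∃ w ∈ S, G.Adj v w ∧ d w < d v

namespace DegreeBounds

variable {x : V} {d : V → ℕ} {S : Finset V} {f : V → ℤ}

theorem nonneg (h : DegreeBounds G x d S f) {v : V} (hv : v ∈ S) : 0 ≤ f v := by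
  by_cases hvx : v = x
  · subst hvx
    exact (Nat.cast_nonneg _).trans h.card_adj_root_le
  · obtain ⟨w, hw, hvw, -⟩ := h.exists_adj_lt v hv hvx
    have hpos : 0 < #(S.filter (G.Adj v)) := card_pos.2 ⟨w, mem_filter.2 ⟨hw, hvw⟩⟩
    have := h.card_adj_le v hv
    omega

/-- As `u` has maximal rank, no vertex uses it as its neighbour of smaller rank. -/
theorem erase (h : DegreeBounds G x d S f) {u : V} (hu : u ∈ S) (hux : u ≠ x)
    (hmax : ∀ v ∈ S.erase x, d v ≤ d u) :
    DegreeBounds G x d (S.erase u) fun v => if G.Adj u v then f v - 1 else f v where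
  root_mem := mem_erase.2 ⟨hux.symm, h.root_mem⟩
  card_adj_le v hv := by
    have := h.card_adj_le v (mem_of_mem_erase hv)
    rw [card_filter_adj_erase hu]
    split_ifs <;> omega
  card_adj_root_le := by
    have := h.card_adj_root_le
    rw [card_filter_adj_erase hu]
    split_ifs <;> omega
  exists_adj_lt v hv hvx := by
    obtain ⟨w, hw, hvw, hwv⟩ := h.exists_adj_lt v (mem_of_mem_erase hv) hvx
    have hwu : w ≠ u := by
      rintro rfl
      have := hmax v (mem_erase.2 ⟨hvx, mem_of_mem_erase hv⟩)
      omega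
    exact ⟨w, mem_erase.2 ⟨hwu, hw⟩, hvw, hwv⟩

theorem degenOn (h : DegreeBounds G x d S f) : DegenOn G S f := by
  induction S using Finset.strongInduction generalizing f with
  | H S ih =>
    obtain hS | ⟨u, hu, hmax⟩ := (S.erase x).eq_empty_or_nonempty.imp_right
      ((S.erase x).exists_max_image d)
    · exact .delete S f x h.root_mem (by simp [hS]) (hS ▸ .empty _)
    · have huS := mem_of_mem_erase hu
      have h' := h.erase huS (ne_of_mem_erase hu) hmax
      exact .delete S f u huS (fun v hv => h'.nonneg hv) (ih _ (erase_ssubset huS) h')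

end DegreeBounds

/-- If `G` is connected, `f(u) ≥ deg_G(u) - 1` for all `u`, and `f(x) ≥ deg_G(x)` for some `x`,
then `G` is `f`-degenerate. -/
theorem degenerate_of_degree_bounds {V : Type*} [Fintype V] (G : SimpleGraph V)
    [DecidableRel G.Adj] (hconn : G.Connected) (f : V → ℕ)
    (h1 : ∀ u, G.degree u ≤ f u + 1) (h2 : ∃ x, G.degree x ≤ f x) :
    DegenOn G Finset.univ fun v => (f v : ℤ) := by
  obtain ⟨x, hx⟩ := h2
  refine DegreeBounds.degenOn (x := x) (d := G.dist x) ⟨mem_univ x, ?_, ?_, ?_⟩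
  · intro v _
    rw [card_filter_adj_univ]
    exact_mod_cast h1 v
  · rw [card_filter_adj_univ]
    exact_mod_cast hx
  · intro v _ hvx
    obtain ⟨w, hvw, hw⟩ := hconn.exists_adj_dist_lt hvx
    exact ⟨w, mem_univ w, hvw, hw⟩

end WeakDeg
end
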